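/- arXiv:1012.2212 — 3 statements merged into one kernel-verified Lean document; each statement's English description precedes it below -/
import Mathlib

section
/- If M ≺ H_θ is an ℵ₀-guessing model, then M ∩ κ_M is a regular cardinal in H_θ. -/
open Cardinal

namespace GuessingModels

/-- First-order formulas in the language of set theory (membership and equality),
with `n` free variables. -/
inductive SF : ℕ → Type
  | mem {n} (i j : Fin n) : SF n
  | eq {n} (i j : Fin n) : SF n
  | imp {n} (f g : SF n) : SF n
  | not {n} (f : SF n) : SF n
  | ex {n} (f : SF (n + 1)) : SF n

/-- Tarskian satisfaction of a set-theoretic formula in the structure `⟨S, ∈⟩`,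
where `S` is a class of ZF sets. -/
def Realize (S : Set ZFSet) : ∀ {n}, SF n → (Fin n → ZFSet) → Prop
  | _, .mem i j, v => v i ∈ v j
  | _, .eq i j, v => v i = v j
  | _, .imp f g, v => Realize S f v → Realize S g v
  | _, .not f, v => ¬ Realize S f v
  | _, .ex f, v => ∃ x ∈ S, Realize S f (Fin.cons x v)

/-- `M ≺ R` : `M` is an elementary substructure of `⟨R, ∈⟩`. -/
def Prec (M R : Set ZFSet) : Prop :=
  M ⊆ R ∧ ∀ {n : ℕ} (φ : SF n) (v : Fin n → ZFSet), (∀ i, v i ∈ M) →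
    (Realize M φ v ↔ Realize R φ v)

/-- A (von Neumann) ordinal: a transitive set of transitive sets. -/
def IsOrd (x : ZFSet) : Prop :=
  x.IsTransitive ∧ ∀ y ∈ x, ZFSet.IsTransitive y

/-- `≤` on ordinals, i.e. `∈` or `=`. -/
def ole (a b : ZFSet) : Prop := a ∈ b ∨ a = b

/-- The cardinality of (the extension of) a ZF set. -/
noncomputable def card (x : ZFSet) : Cardinal := Cardinal.mk x.toSet

/-- A ZF set which is a cardinal: an ordinal not equinumerous with any of its members. -/
def IsCard (κ : ZFSet) : Prop := IsOrd κ ∧ ∀ β ∈ κ, card β < card κ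

/-- `s` (an external class) is a cofinal subset of the ordinal `κ`. -/
def CofinalSetIn (s : Set ZFSet) (κ : ZFSet) : Prop :=
  (∀ x ∈ s, x ∈ κ) ∧ ∀ β ∈ κ, ∃ γ ∈ s, ole β γ

/-- A regular cardinal: an infinite cardinal all of whose cofinal subsets have full size. -/
def IsRegCard (κ : ZFSet) : Prop :=
  IsCard κ ∧ ZFSet.omega ⊆ κ ∧
    ∀ s : Set ZFSet, CofinalSetIn s κ → Cardinal.mk s = card κ

/-- A strong limit ZF cardinal. -/
def IsStrongLimit (κ : ZFSet) : Prop := ∀ β ∈ κ, (2 : Cardinal) ^ card β < card κ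

/-- A strongly inaccessible cardinal: regular, uncountable and strong limit. -/
def IsInacc (κ : ZFSet) : Prop := IsRegCard κ ∧ ZFSet.omega ∈ κ ∧ IsStrongLimit κ

/-- The transitive closure of a ZF set, as a class. -/
def tcl (x : ZFSet) : Set ZFSet := {y | Relation.TransGen (· ∈ ·) y x}

/-- `H_θ` : the class of sets hereditarily of size `< θ`. -/
noncomputable def HSet (θ : ZFSet) : Set ZFSet := {x | Cardinal.mk (tcl x) < card θ}

/-- `V_α` as a class, for `α` an ordinal (as a ZF set): sets of rank `< α`. -/
noncomputable def VSet (α : ZFSet) : Set ZFSet := {x | x.rank < α.rank}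

/-- A suitable initial segment: `H_θ` for a regular cardinal `θ`, or a rank initial
segment `V_α`. -/
def Suitable (R : Set ZFSet) : Prop :=
  (∃ θ : ZFSet, IsRegCard θ ∧ R = HSet θ) ∨ (∃ α : ZFSet, IsOrd α ∧ R = VSet α)

/-- `κ = κ_M` : `κ` is the least ordinal in `M` with `M ∩ κ ≠ κ`. -/
def KappaSpec (M : Set ZFSet) (κ : ZFSet) : Prop :=
  IsOrd κ ∧ κ ∈ M ∧ (∃ β ∈ κ, β ∉ M) ∧
    ∀ α : ZFSet, IsOrd α → α ∈ M → (∃ β ∈ α, β ∉ M) → ole κ α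

/-- `d` is `(δ, M)`-approximated: `d ∩ Z ∈ M` for every `Z ∈ M` of size `< δ`. -/
noncomputable def Approx (M : Set ZFSet) (δ : Cardinal.{1}) (d : ZFSet) : Prop :=
  ∀ Z : ZFSet, Z ∈ M → card Z < δ → (d ∩ Z) ∈ M

/-- `d ⊆ X` is `M`-guessed: `d ∩ M = e ∩ M` for some `e ∈ M ∩ P(X)`. -/
def Guessed (M : Set ZFSet) (X d : ZFSet) : Prop :=
  ∃ e : ZFSet, e ∈ M ∧ e ⊆ X ∧ ∀ z ∈ M, (z ∈ e ↔ z ∈ d)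

/-- `M` is a `δ`-guessing model: every `(δ,M)`-approximated subset of any `X ∈ M`
is `M`-guessed. -/
noncomputable def GuessingModel (M : Set ZFSet) (δ : Cardinal.{1}) : Prop :=
  ∀ X ∈ M, ∀ d : ZFSet, d ⊆ X → Approx M δ d → Guessed M X d

/-- `M` is `ℵ₁`-internally unbounded: every countable subset of `M` is contained
in a countable element of `M`. -/
noncomputable def IntUnb (M : Set ZFSet) : Prop :=
  ∀ A : Set ZFSet, A ⊆ M → A.Countable → ∃ z ∈ M, card z ≤ ℵ₀ ∧ A ⊆ z.toSet

/-!
Write `μ = M ∩ κ_M`. Every ordinal of `M` below `κ_M` is a subset of `M`, so `μ` is an ordinal, and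
`μ ∉ M`. Since `H_θ` is transitive, `Δ₀` properties of parameters in `M` are absolute, so
elementarity provides in `M` the order type of any `A ∈ M` of ordinals together with the
isomorphism. For `A ⊆ κ_M` that order type is at most `κ_M`; if it is smaller, it is a subset of
`M`, which the isomorphism, lying in `M`, maps into `M`, hence `A ⊆ M`. So either `A ⊆ M` or `M`
contains an isomorphism `κ_M ≅ A`.

`μ` is a cardinal: a bijection `b → μ` with `b ∈ μ` has a graph inside `M`, guessed by some `e ∈ M`.
Uniqueness of values reflects from `M` to `H_θ`, so on `b` the set `e` is that graph, and `μ`, its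
range, is definable from `e` and lies in `M`.

`μ` is regular: a cofinal `s ⊆ μ` is guessed by some `e ⊆ κ_M` in `M`. A bound of `e` below `κ_M`
would reflect to one in `μ`, which `s` exceeds; so `e ⊄ M`, and the isomorphism `κ_M ≅ e` in `M`
maps `μ` injectively into `e ∩ M = s`.
-/

theorem isOrd_iff_isOrdinal {x : ZFSet} : IsOrd x ↔ x.IsOrdinal :=
  ZFSet.isOrdinal_iff_forall_mem_isTransitive.symm

theorem toZFSet_natCast (n : ℕ) : Ordinal.toZFSet n = ZFSet.mk (PSet.ofNat n) := by
  induction n with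
  | zero => simp [Ordinal.toZFSet_zero]; rfl
  | succ n ih => rw [Nat.cast_succ, Ordinal.toZFSet_add_one, ih]; rfl

theorem mem_omega_iff {x : ZFSet} : x ∈ ZFSet.omega ↔ ∃ n : ℕ, x = Ordinal.toZFSet n := by
  induction x using Quotient.inductionOn with
  | h y =>
  simp only [toZFSet_natCast, ZFSet.omega]
  exact ⟨fun ⟨⟨n⟩, h⟩ => ⟨n, ZFSet.sound h⟩, fun ⟨n, h⟩ => ⟨⟨n⟩, ZFSet.exact h⟩⟩

theorem aleph0_le_card_omega : ℵ₀ ≤ card ZFSet.omega := by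
  have : Infinite ZFSet.omega.toSet := Infinite.of_injective
    (fun n : ℕ => ⟨Ordinal.toZFSet n, mem_omega_iff.2 ⟨n, rfl⟩⟩)
    fun m n h => Nat.cast_injective (Ordinal.toZFSet_injective (congrArg Subtype.val h))
  exact Cardinal.infinite_iff.1 this

theorem IsRegCard.aleph0_le_card {θ : ZFSet} (hθ : IsRegCard θ) : ℵ₀ ≤ card θ :=
  aleph0_le_card_omega.trans (Cardinal.mk_le_mk_of_subset hθ.2.1)

/-! ### Δ₀ formulas and absoluteness -/

def IsTransClass (R : Set ZFSet) : Prop := ∀ x ∈ R, ∀ y ∈ x, y ∈ R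

inductive Delta0 : ℕ → Type
  | mem {n} (i j : Fin n) : Delta0 n
  | eq {n} (i j : Fin n) : Delta0 n
  | imp {n} (φ ψ : Delta0 n) : Delta0 n
  | not {n} (φ : Delta0 n) : Delta0 n
  | bex {n} (i : Fin n) (φ : Delta0 (n + 1)) : Delta0 n

namespace Delta0

variable {n : ℕ}

/-- Truth in the universe of sets. Variables are de Bruijn indices: in `bex i φ` the new variable
is `0` in `φ` and ranges over the set named by `i`. -/
def Realize : ∀ {n}, Delta0 n → (Fin n → ZFSet) → Prop
  | _, mem i j, v => v i ∈ v j
  | _, eq i j, v => v i = v j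
  | _, imp φ ψ, v => φ.Realize v → ψ.Realize v
  | _, not φ, v => ¬ φ.Realize v
  | _, bex i φ, v => ∃ x ∈ v i, φ.Realize (Matrix.vecCons x v)

def and (φ ψ : Delta0 n) : Delta0 n := not (imp φ (not ψ))
def or (φ ψ : Delta0 n) : Delta0 n := imp (not φ) ψ
def ball (i : Fin n) (φ : Delta0 (n + 1)) : Delta0 n := not (bex i (not φ))

@[simp] theorem realize_mem {i j : Fin n} {v} : (mem i j).Realize v ↔ v i ∈ v j := .rfl
@[simp] theorem realize_eq {i j : Fin n} {v} : (eq i j).Realize v ↔ v i = v j := .rfl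
@[simp] theorem realize_imp {φ ψ : Delta0 n} {v} :
    (imp φ ψ).Realize v ↔ (φ.Realize v → ψ.Realize v) := .rfl
@[simp] theorem realize_not {φ : Delta0 n} {v} : (not φ).Realize v ↔ ¬ φ.Realize v := .rfl
@[simp] theorem realize_bex {i : Fin n} {φ : Delta0 (n + 1)} {v} :
    (bex i φ).Realize v ↔ ∃ x ∈ v i, φ.Realize (Matrix.vecCons x v) := .rfl
@[simp] theorem realize_and {φ ψ : Delta0 n} {v} :
    (and φ ψ).Realize v ↔ φ.Realize v ∧ ψ.Realize v := by
  simp [and]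
@[simp] theorem realize_or {φ ψ : Delta0 n} {v} :
    (or φ ψ).Realize v ↔ φ.Realize v ∨ ψ.Realize v := by
  simp [or, or_iff_not_imp_left]
@[simp] theorem realize_ball {i : Fin n} {φ : Delta0 (n + 1)} {v} :
    (ball i φ).Realize v ↔ ∀ x ∈ v i, φ.Realize (Matrix.vecCons x v) := by
  simp [ball]

def toSF : ∀ {n}, Delta0 n → SF n
  | _, mem i j => .mem i j
  | _, eq i j => .eq i j
  | _, imp φ ψ => .imp φ.toSF ψ.toSF
  | _, not φ => .not φ.toSF
  | _, bex i φ => .ex (.not (.imp (.mem 0 i.succ) (.not φ.toSF)))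

theorem realize_toSF {S : Set ZFSet} (hS : IsTransClass S) :
    ∀ {n} (φ : Delta0 n) {v : Fin n → ZFSet}, (∀ i, v i ∈ S) →
      (GuessingModels.Realize S φ.toSF v ↔ φ.Realize v)
  | _, mem i j, v, _ => .rfl
  | _, eq i j, v, _ => .rfl
  | _, imp φ ψ, v, hv => imp_congr (realize_toSF hS φ hv) (realize_toSF hS ψ hv)
  | _, not φ, v, hv => not_congr (realize_toSF hS φ hv)
  | _, bex i φ, v, hv => by
    simp only [toSF, GuessingModels.Realize, Classical.not_imp, not_not, realize_bex]
    constructor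
    · rintro ⟨x, -, hx, h⟩
      exact ⟨x, hx, (realize_toSF hS φ (Fin.cases (hS _ (hv i) x hx) hv)).1 h⟩
    · rintro ⟨x, hx, h⟩
      have hxS := hS _ (hv i) x hx
      exact ⟨x, hxS, hx, (realize_toSF hS φ (Fin.cases hxS hv)).2 h⟩

def rename : ∀ {n m}, (Fin n → Fin m) → Delta0 n → Delta0 m
  | _, _, σ, mem i j => mem (σ i) (σ j)
  | _, _, σ, eq i j => eq (σ i) (σ j)
  | _, _, σ, imp φ ψ => imp (φ.rename σ) (ψ.rename σ)
  | _, _, σ, not φ => not (φ.rename σ)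
  | _, _, σ, bex i φ => bex (σ i) (φ.rename (Fin.cons 0 (Fin.succ ∘ σ)))

@[simp] theorem realize_rename :
    ∀ {n m} (σ : Fin n → Fin m) (φ : Delta0 n) (v : Fin m → ZFSet),
      (φ.rename σ).Realize v ↔ φ.Realize (v ∘ σ)
  | _, _, σ, mem i j, v => .rfl
  | _, _, σ, eq i j, v => .rfl
  | _, _, σ, imp φ ψ, v => imp_congr (realize_rename σ φ v) (realize_rename σ ψ v)
  | _, _, σ, not φ, v => not_congr (realize_rename σ φ v)
  | _, _, σ, bex i φ, v => by
    simp only [rename, realize_bex, realize_rename, Function.comp_apply]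
    refine exists_congr fun x => and_congr_right fun _ => ?_
    rw [show (Matrix.vecCons x v : Fin _ → ZFSet) ∘ Fin.cons 0 (Fin.succ ∘ σ) =
        Matrix.vecCons x (v ∘ σ) from funext fun i => Fin.cases rfl (fun _ => rfl) i]

def isTransitive (i : Fin n) : Delta0 n := ball i (ball 0 (mem 0 i.succ.succ))
def isOrdinal (i : Fin n) : Delta0 n := and (isTransitive i) (ball i (isTransitive 0))
def isSingleton (w a : Fin n) : Delta0 n := and (mem a w) (ball w (eq 0 a.succ))
def isDoubleton (w a b : Fin n) : Delta0 n :=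
  and (mem a w) (and (mem b w) (ball w (or (eq 0 a.succ) (eq 0 b.succ))))
def isPair (p x y : Fin n) : Delta0 n :=
  and (ball p (or (isSingleton 0 x.succ) (isDoubleton 0 x.succ y.succ)))
    (and (bex p (isSingleton 0 x.succ)) (bex p (isDoubleton 0 x.succ y.succ)))
def pairMem (g x y : Fin n) : Delta0 n := bex g (isPair 0 x.succ y.succ)

@[simp] theorem realize_isTransitive {i : Fin n} {v} :
    (isTransitive i).Realize v ↔ (v i).IsTransitive := by
  simp [isTransitive, ZFSet.IsTransitive, ZFSet.subset_def]

@[simp] theorem realize_isOrdinal {i : Fin n} {v} :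
    (isOrdinal i).Realize v ↔ (v i).IsOrdinal := by
  simp [isOrdinal, ZFSet.isOrdinal_iff_forall_mem_isTransitive]

@[simp] theorem realize_isSingleton {w a : Fin n} {v} :
    (isSingleton w a).Realize v ↔ v w = {v a} := by
  simp only [isSingleton, realize_and, realize_mem, realize_ball, realize_eq,
    Matrix.cons_val_zero, Matrix.cons_val_succ]
  refine ⟨fun ⟨ha, h⟩ => ZFSet.ext fun z => ?_, fun h => by simp [h]⟩
  rw [ZFSet.mem_singleton]
  exact ⟨h z, fun hz => hz ▸ ha⟩

@[simp] theorem realize_isDoubleton {w a b : Fin n} {v} :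
    (isDoubleton w a b).Realize v ↔ v w = {v a, v b} := by
  simp only [isDoubleton, realize_and, realize_mem, realize_ball, realize_or, realize_eq,
    Matrix.cons_val_zero, Matrix.cons_val_succ]
  refine ⟨fun ⟨ha, hb, h⟩ => ZFSet.ext fun z => ?_, fun h => by simp [h]⟩
  rw [ZFSet.mem_pair]
  exact ⟨h z, by rintro (rfl | rfl) <;> assumption⟩

@[simp] theorem realize_isPair {p x y : Fin n} {v} :
    (isPair p x y).Realize v ↔ v p = ZFSet.pair (v x) (v y) := by
  simp only [isPair, realize_and, realize_ball, realize_bex, realize_or, realize_isSingleton,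
    realize_isDoubleton, Matrix.cons_val_zero, Matrix.cons_val_succ]
  refine ⟨fun ⟨h, ⟨_, hs, rfl⟩, ⟨_, hd, rfl⟩⟩ => ZFSet.ext fun z => ?_,
    fun h => by simp [h, ZFSet.pair]⟩
  rw [ZFSet.pair, ZFSet.mem_pair]
  exact ⟨h z, by rintro (rfl | rfl) <;> assumption⟩

@[simp] theorem realize_pairMem {g x y : Fin n} {v} :
    (pairMem g x y).Realize v ↔ ZFSet.pair (v x) (v y) ∈ v g := by
  simp [pairMem]

end Delta0

/-! ### Sets hereditarily of size `< θ` -/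

theorem mem_tcl {x y : ZFSet} : y ∈ tcl x ↔ y ∈ x ∨ ∃ b ∈ x, y ∈ tcl b := by
  simp only [tcl, Set.mem_ofPred_eq, Relation.transGen_iff _ y x]
  exact or_congr_right ⟨fun ⟨b, hyb, hbx⟩ => ⟨b, hbx, hyb⟩, fun ⟨b, hbx, hyb⟩ => ⟨b, hyb, hbx⟩⟩

theorem mem_tcl_of_mem {x y : ZFSet} (h : y ∈ x) : y ∈ tcl x := Relation.TransGen.single h

theorem tcl_subset_of_mem {x b : ZFSet} (h : b ∈ x) : tcl b ⊆ tcl x :=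
  fun _ hz => Relation.TransGen.tail hz h

theorem tcl_mono {x w : ZFSet} (h : x ⊆ w) : tcl x ⊆ tcl w := by
  intro z hz
  rcases mem_tcl.1 hz with hzx | ⟨b, hb, hzb⟩
  · exact mem_tcl_of_mem (h hzx)
  · exact tcl_subset_of_mem (h hb) hzb

theorem tcl_subset_of_isTransitive {x : ZFSet} (h : x.IsTransitive) : tcl x ⊆ x := by
  intro y hy
  induction hy using Relation.TransGen.head_induction_on with
  | single hyx => exact hyx
  | head hyz _ ih => exact h _ ih hyz

@[simp] theorem tcl_empty : tcl ∅ = ∅ := by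
  ext y
  simp [mem_tcl (x := ∅)]

theorem tcl_insert (a w : ZFSet) : tcl (insert a w) = insert a (tcl a ∪ tcl w) := by
  ext y
  simp only [mem_tcl (x := insert a w), mem_tcl (x := w), ZFSet.mem_insert_iff,
    Set.mem_insert_iff, Set.mem_union, exists_eq_or_imp]
  tauto

@[simp] theorem tcl_singleton (a : ZFSet) : tcl {a} = insert a (tcl a) := by
  rw [← LawfulSingleton.insert_empty_eq, tcl_insert, tcl_empty, Set.union_empty]

theorem mem_hset_of_mem {θ x y : ZFSet} (hx : x ∈ HSet θ) (hy : y ∈ x) : y ∈ HSet θ :=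
  (Cardinal.mk_le_mk_of_subset (tcl_subset_of_mem hy)).trans_lt hx

theorem isTransClass_hset {θ : ZFSet} : IsTransClass (HSet θ) :=
  fun _ hx _ => mem_hset_of_mem hx

theorem mem_hset_of_subset {θ x w : ZFSet} (h : x ⊆ w) (hw : w ∈ HSet θ) : x ∈ HSet θ :=
  (Cardinal.mk_le_mk_of_subset (tcl_mono h)).trans_lt hw

theorem mem_hset_of_isTransitive {θ x : ZFSet} (h : x.IsTransitive) (hx : card x < card θ) :
    x ∈ HSet θ :=
  (Cardinal.mk_le_mk_of_subset (tcl_subset_of_isTransitive h)).trans_lt hx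

theorem card_lt_of_mem_hset {θ x : ZFSet} (hx : x ∈ HSet θ) : card x < card θ :=
  (Cardinal.mk_le_mk_of_subset fun _ => mem_tcl_of_mem).trans_lt hx

theorem mem_hset_of_pair_mem {θ g x y : ZFSet} (hg : g ∈ HSet θ) (h : ZFSet.pair x y ∈ g) :
    x ∈ HSet θ ∧ y ∈ HSet θ := by
  have hp := mem_hset_of_mem hg h
  have hs : ({x} : ZFSet) ∈ ZFSet.pair x y := by simp [ZFSet.pair]
  have hd : ({x, y} : ZFSet) ∈ ZFSet.pair x y := by simp [ZFSet.pair]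
  exact ⟨mem_hset_of_mem (mem_hset_of_mem hp hs) (by simp),
    mem_hset_of_mem (mem_hset_of_mem hp hd) (by simp)⟩

section Closure

variable {θ : ZFSet} (hθ : ℵ₀ ≤ card θ)
include hθ

theorem empty_mem_hset : ∅ ∈ HSet θ := by
  simpa [HSet] using Cardinal.aleph0_pos.trans_le hθ

theorem insert_mem_hset {a w : ZFSet} (ha : a ∈ HSet θ) (hw : w ∈ HSet θ) :
    insert a w ∈ HSet θ := by
  rw [HSet, Set.mem_ofPred_eq, tcl_insert]
  exact Cardinal.mk_insert_le.trans_lt <| Cardinal.add_lt_of_lt hθ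
    ((Cardinal.mk_union_le _ _).trans_lt (Cardinal.add_lt_of_lt hθ ha hw))
    (Cardinal.one_lt_aleph0.trans_le hθ)

theorem prod_mem_hset {a b : ZFSet} (ha : a ∈ HSet θ) (hb : b ∈ HSet θ) :
    ZFSet.prod a b ∈ HSet θ := by
  have union_lt : ∀ {s t : Set ZFSet}, Cardinal.mk s < card θ → Cardinal.mk t < card θ →
      Cardinal.mk ↥(s ∪ t) < card θ := fun hs ht =>
    (Cardinal.mk_union_le _ _).trans_lt (Cardinal.add_lt_of_lt hθ hs ht)
  have range_lt : ∀ f : a × b → ZFSet, Cardinal.mk (Set.range f) < card θ := fun f => by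
    refine Cardinal.mk_range_le.trans_lt ?_
    rw [Cardinal.mk_prod, Cardinal.lift_id, Cardinal.lift_id]
    exact Cardinal.mul_lt_of_lt hθ (card_lt_of_mem_hset ha) (card_lt_of_mem_hset hb)
  have hcover : tcl (ZFSet.prod a b) ⊆
      Set.range (fun q : a × b => ZFSet.pair q.1 q.2) ∪ Set.range (fun q : a × b => {q.1.1}) ∪
        Set.range (fun q : a × b => {q.1.1, q.2.1}) ∪ tcl a ∪ tcl b := by
    intro z hz
    rcases mem_tcl.1 hz with hz | ⟨p, hp, hzp⟩
    · obtain ⟨x, hx, y, hy, rfl⟩ := ZFSet.mem_prod.1 hz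
      exact Or.inl <| Or.inl <| Or.inl <| Or.inl ⟨(⟨x, hx⟩, ⟨y, hy⟩), rfl⟩
    obtain ⟨x, hx, y, hy, rfl⟩ := ZFSet.mem_prod.1 hp
    simp only [ZFSet.pair, tcl_insert, tcl_singleton, Set.mem_insert_iff, Set.mem_union] at hzp
    have hxa : insert x (tcl x) ⊆ tcl a :=
      Set.insert_subset (mem_tcl_of_mem hx) (tcl_subset_of_mem hx)
    have hyb : insert y (tcl y) ⊆ tcl b :=
      Set.insert_subset (mem_tcl_of_mem hy) (tcl_subset_of_mem hy)
    rcases hzp with rfl | h | rfl | h | h | h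
    · exact Or.inl <| Or.inl <| Or.inl <| Or.inr ⟨(⟨x, hx⟩, ⟨y, hy⟩), rfl⟩
    · exact Or.inl <| Or.inr (hxa h)
    · exact Or.inl <| Or.inl <| Or.inr ⟨(⟨x, hx⟩, ⟨y, hy⟩), rfl⟩
    · exact Or.inl <| Or.inr (hxa (Or.inl h))
    · exact Or.inl <| Or.inr (hxa (Or.inr h))
    · exact Or.inr (hyb h)
  exact (Cardinal.mk_le_mk_of_subset hcover).trans_lt <|
    union_lt (union_lt (union_lt (union_lt (range_lt _) (range_lt _)) (range_lt _)) ha) hb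

end Closure

/-! ### Elementary submodels -/

theorem forall_vecCons_mem {S : Set ZFSet} {n : ℕ} {a : ZFSet} {v : Fin n → ZFSet}
    (ha : a ∈ S) (hv : ∀ i, v i ∈ S) : ∀ i, Matrix.vecCons a v i ∈ S :=
  fun i => Fin.cases ha hv i

section Reflection

variable {M R : Set ZFSet} {n : ℕ}

theorem Prec.exists_mem (hM : Prec M R) (φ : SF (n + 1)) {v : Fin n → ZFSet}
    (hv : ∀ i, v i ∈ M) (h : ∃ y ∈ R, Realize R φ (Fin.cons y v)) :
    ∃ y ∈ M, Realize R φ (Fin.cons y v) := by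
  obtain ⟨y, hyM, hy⟩ := (hM.2 (.ex φ) v hv).2 h
  exact ⟨y, hyM, (hM.2 φ _ (forall_vecCons_mem hyM hv)).1 hy⟩

variable (hR : IsTransClass R)
include hR

theorem Prec.exists_mem_delta0 (hM : Prec M R) (φ : Delta0 (n + 1)) {v : Fin n → ZFSet}
    (hv : ∀ i, v i ∈ M) (h : ∃ y ∈ R, φ.Realize (Matrix.vecCons y v)) :
    ∃ y ∈ M, φ.Realize (Matrix.vecCons y v) := by
  have hvR i : v i ∈ R := hM.1 (hv i)
  obtain ⟨y, hyM, hy⟩ := hM.exists_mem φ.toSF hv <| h.imp fun y ⟨hyR, hy⟩ =>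
    ⟨hyR, (φ.realize_toSF hR (forall_vecCons_mem hyR hvR)).2 hy⟩
  exact ⟨y, hyM, (φ.realize_toSF hR (forall_vecCons_mem (hM.1 hyM) hvR)).1 hy⟩

theorem Prec.exists_mem_delta0₂ (hM : Prec M R) (φ : Delta0 (n + 2)) {v : Fin n → ZFSet}
    (hv : ∀ i, v i ∈ M)
    (h : ∃ y ∈ R, ∃ z ∈ R, φ.Realize (Matrix.vecCons z (Matrix.vecCons y v))) :
    ∃ y ∈ M, ∃ z ∈ M, φ.Realize (Matrix.vecCons z (Matrix.vecCons y v)) := by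
  have hvR i : v i ∈ R := hM.1 (hv i)
  obtain ⟨y, hyM, z, hzR, hz⟩ := hM.exists_mem (.ex φ.toSF) hv <|
    h.imp fun y ⟨hyR, z, hzR, hz⟩ => ⟨hyR, z, hzR,
      (φ.realize_toSF hR (forall_vecCons_mem hzR (forall_vecCons_mem hyR hvR))).2 hz⟩
  have hyv := forall_vecCons_mem (hM.1 hyM) hvR
  exact ⟨y, hyM, hM.exists_mem_delta0 hR φ (forall_vecCons_mem hyM hv)
    ⟨z, hzR, (φ.realize_toSF hR (forall_vecCons_mem hzR hyv)).1 hz⟩⟩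

theorem Prec.mem_of_delta0_iff_eq (hM : Prec M R) (φ : Delta0 (n + 1)) {v : Fin n → ZFSet}
    (hv : ∀ i, v i ∈ M) {t : ZFSet} (ht : t ∈ R)
    (hφ : ∀ y, φ.Realize (Matrix.vecCons y v) ↔ y = t) : t ∈ M := by
  obtain ⟨y, hyM, hy⟩ := hM.exists_mem_delta0 hR φ hv ⟨t, ht, (hφ t).2 rfl⟩
  rwa [← (hφ y).1 hy]

end Reflection

section Elementary

open Delta0

variable {θ : ZFSet} {M : Set ZFSet} (hM : Prec M (HSet θ))
include hM

theorem Prec.sep_mem {n : ℕ} (φ : Delta0 (n + 1)) {v : Fin n → ZFSet} (hv : ∀ i, v i ∈ M)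
    {X : ZFSet} (hX : X ∈ M) : ZFSet.sep (fun z => φ.Realize (Matrix.vecCons z v)) X ∈ M := by
  let φ' : Delta0 (n + 3) := φ.rename (Fin.cons 0 fun i => i.succ.succ.succ)
  have hφ' : ∀ z w, φ'.Realize (Matrix.vecCons z (Matrix.vecCons w (Matrix.vecCons X v))) ↔
      φ.Realize (Matrix.vecCons z v) := fun z w => by
    rw [realize_rename]
    exact iff_of_eq (congrArg _ (funext fun i => Fin.cases rfl (fun _ => rfl) i))
  refine hM.mem_of_delta0_iff_eq isTransClass_hset (and (ball 0 (and (mem 0 2) φ'))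
    (ball 1 (imp φ' (mem 0 1)))) (forall_vecCons_mem hX hv)
    (mem_hset_of_subset (fun _ hz => (ZFSet.mem_sep.1 hz).1) (hM.1 hX)) fun w => ?_
  simp only [realize_and, realize_ball, realize_imp, realize_mem, hφ', Matrix.cons_val_zero,
    Matrix.cons_val_one, Matrix.cons_val_two]
  refine ⟨fun ⟨h₁, h₂⟩ => ZFSet.ext fun z => ?_, fun h => ?_⟩
  · rw [ZFSet.mem_sep]
    exact ⟨h₁ z, fun hz => h₂ z hz.1 hz.2⟩
  · subst h
    exact ⟨fun z hz => ZFSet.mem_sep.1 hz, fun z hz hφ => ZFSet.mem_sep.2 ⟨hz, hφ⟩⟩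

theorem Prec.mem_of_pair_mem {g x y : ZFSet} (hg : g ∈ M) (hx : x ∈ M)
    (hxy : ZFSet.pair x y ∈ g) (hfun : ∀ y', ZFSet.pair x y' ∈ g → y' = y) : y ∈ M := by
  obtain ⟨y', hy'M, hy'⟩ := hM.exists_mem_delta0 isTransClass_hset
    (pairMem 1 2 0) (v := ![g, x]) (by simp [Fin.forall_fin_succ, hg, hx])
    ⟨y, (mem_hset_of_pair_mem (hM.1 hg) hxy).2, by simpa using hxy⟩
  rwa [← hfun y' (by simpa using hy')]

theorem Prec.eq_of_pair_mem {e x t y : ZFSet} (he : e ∈ M) (hx : x ∈ M) (ht : t ∈ M)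
    (huniq : ∀ y' ∈ M, ZFSet.pair x y' ∈ e → y' = t) (hxy : ZFSet.pair x y ∈ e) : y = t := by
  by_contra hyt
  obtain ⟨y', hy'M, hy'⟩ := hM.exists_mem_delta0 isTransClass_hset
    (and (pairMem 1 2 0) (not (eq 0 3))) (v := ![e, x, t])
    (by simp [Fin.forall_fin_succ, he, hx, ht])
    ⟨y, (mem_hset_of_pair_mem (hM.1 he) hxy).2, by simpa using ⟨hxy, hyt⟩⟩
  simp only [realize_and, realize_pairMem, realize_not, realize_eq] at hy'
  exact hy'.2 (huniq y' hy'M hy'.1)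

theorem Prec.exists_mem_bound {X e : ZFSet} (hX : X ∈ M) (he : e ∈ M)
    (h : ∃ b ∈ X, e ⊆ b) : ∃ b ∈ M, b ∈ X ∧ e ⊆ b := by
  obtain ⟨b, hbX, heb⟩ := h
  obtain ⟨b', hb'M, hb'⟩ := hM.exists_mem_delta0 isTransClass_hset
    (and (mem 0 1) (ball 2 (mem 0 1))) (v := ![X, e]) (by simp [Fin.forall_fin_succ, hX, he])
    ⟨b, mem_hset_of_mem (hM.1 hX) hbX, by simpa using ⟨hbX, fun z hz => heb hz⟩⟩
  simp only [realize_and, realize_mem, realize_ball] at hb'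
  exact ⟨b', hb'M, hb'.1, fun z hz => hb'.2 z hz⟩

variable (hθ : ℵ₀ ≤ card θ)
include hθ

theorem Prec.empty_mem : ∅ ∈ M :=
  hM.mem_of_delta0_iff_eq isTransClass_hset (ball 0 (not (eq 0 0)))
    (v := ![]) (by simp) (empty_mem_hset hθ) fun y => by simp [ZFSet.ext_iff]

theorem Prec.insert_mem {a w : ZFSet} (ha : a ∈ M) (hw : w ∈ M) : insert a w ∈ M := by
  refine hM.mem_of_delta0_iff_eq isTransClass_hset
    (and (mem 1 0) (and (ball 0 (or (eq 0 2) (mem 0 3))) (ball 2 (mem 0 1))))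
    (v := ![a, w]) (by simp [Fin.forall_fin_succ, ha, hw])
    (insert_mem_hset hθ (hM.1 ha) (hM.1 hw)) fun y => ?_
  simp only [realize_and, realize_ball, realize_or, realize_mem, realize_eq,
    Matrix.cons_val_zero, Matrix.cons_val_one, Matrix.cons_val_two, Matrix.cons_val_three]
  refine ⟨fun ⟨ha, h₁, h₂⟩ => ZFSet.ext fun z => ?_, fun h => by simp +contextual [h]⟩
  rw [ZFSet.mem_insert_iff]
  exact ⟨h₁ z, by rintro (rfl | hz); exacts [ha, h₂ z hz]⟩

theorem Prec.pair_mem {a b : ZFSet} (ha : a ∈ M) (hb : b ∈ M) : ZFSet.pair a b ∈ M := by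
  have hsing : ∀ {c}, c ∈ M → ({c} : ZFSet) ∈ M := fun hc => by
    rw [← LawfulSingleton.insert_empty_eq]; exact hM.insert_mem hθ hc (hM.empty_mem hθ)
  exact hM.insert_mem hθ (hsing ha) (hsing (hM.insert_mem hθ ha (hsing hb)))

theorem Prec.prod_mem {a b : ZFSet} (ha : a ∈ M) (hb : b ∈ M) : ZFSet.prod a b ∈ M := by
  refine hM.mem_of_delta0_iff_eq isTransClass_hset
    (and (ball 0 (bex 2 (bex 4 (isPair 2 1 0)))) (ball 1 (ball 3 (pairMem 2 1 0))))
    (v := ![a, b]) (by simp [Fin.forall_fin_succ, ha, hb])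
    (prod_mem_hset hθ (hM.1 ha) (hM.1 hb)) fun y => ?_
  simp only [realize_and, realize_ball, realize_bex, realize_isPair, realize_pairMem,
    Matrix.cons_val_zero, Matrix.cons_val_one, Matrix.cons_val_two]
  refine ⟨fun ⟨h₁, h₂⟩ => ZFSet.ext fun p => ?_, fun h => ?_⟩
  · rw [ZFSet.mem_prod]
    exact ⟨h₁ p, by rintro ⟨x, hx, u, hu, rfl⟩; exact h₂ x hx u hu⟩
  · subst h
    exact ⟨fun p hp => ZFSet.mem_prod.1 hp, fun x hx u hu => ZFSet.pair_mem_prod.2 ⟨hx, hu⟩⟩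

theorem Prec.mem_of_finite {x : ZFSet} (hfin : (x : Set ZFSet).Finite)
    (hxM : (x : Set ZFSet) ⊆ M) : x ∈ M := by
  suffices ∀ s : Set ZFSet, s.Finite → s ⊆ M → ∃ y ∈ M, (y : Set ZFSet) = s by
    obtain ⟨y, hyM, hy⟩ := this _ hfin hxM
    rwa [← SetLike.coe_injective hy]
  intro s hs
  induction s, hs using Set.Finite.induction_on with
  | empty => exact fun _ => ⟨∅, hM.empty_mem hθ, ZFSet.coe_empty⟩
  | @insert a s _ _ ih =>
    intro has
    obtain ⟨y, hyM, rfl⟩ := ih ((Set.subset_insert _ _).trans has)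
    exact ⟨insert a y, hM.insert_mem hθ (has (Set.mem_insert _ _)) hyM, ZFSet.coe_insert _ _⟩

theorem Prec.approx_of_subset {d : ZFSet} (hd : (d : Set ZFSet) ⊆ M) : Approx M ℵ₀ d :=
  fun _ _ hZ => hM.mem_of_finite hθ
    ((Cardinal.lt_aleph0_iff_set_finite.1 hZ).subset fun _ hz => (ZFSet.mem_inter.1 hz).2)
    fun _ hz => hd (ZFSet.mem_inter.1 hz).1

end Elementary

/-! ### Order types -/

section OrderType

open Delta0

structure IsOrderIso (α g A : ZFSet) : Prop where
  isOrdinal : α.IsOrdinal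
  pair_of_mem : ∀ p ∈ g, ∃ x ∈ α, ∃ y ∈ A, p = ZFSet.pair x y
  total : ∀ x ∈ α, ∃ y ∈ A, ZFSet.pair x y ∈ g
  surj : ∀ y ∈ A, ∃ x ∈ α, ZFSet.pair x y ∈ g
  functional : ∀ x ∈ α, ∀ y ∈ A, ∀ y' ∈ A,
    ZFSet.pair x y ∈ g → ZFSet.pair x y' ∈ g → y = y'
  strictMono : ∀ x ∈ α, ∀ x' ∈ α, ∀ y ∈ A, ∀ y' ∈ A,
    ZFSet.pair x y ∈ g → ZFSet.pair x' y' ∈ g → x ∈ x' → y ∈ y'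

def isOrderIsoFormula : Delta0 3 :=
  and (isOrdinal 1) <| and (ball 0 (bex 2 (bex 4 (isPair 2 1 0)))) <|
    and (ball 1 (bex 3 (pairMem 2 1 0))) <| and (ball 2 (bex 2 (pairMem 2 0 1))) <|
      and (ball 1 (ball 3 (ball 4 (imp (pairMem 3 2 1) (imp (pairMem 3 2 0) (eq 1 0)))))) <|
        ball 1 (ball 2 (ball 4 (ball 5
          (imp (pairMem 4 3 1) (imp (pairMem 4 2 0) (imp (mem 3 2) (mem 1 0)))))))

theorem realize_isOrderIsoFormula {g α A : ZFSet} :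
    isOrderIsoFormula.Realize ![g, α, A] ↔ IsOrderIso α g A := by
  simp only [isOrderIsoFormula, realize_and, realize_ball, realize_bex, realize_imp, realize_mem,
    realize_eq, realize_isOrdinal, realize_isPair, realize_pairMem, Matrix.cons_val]
  exact ⟨fun ⟨h₁, h₂, h₃, h₄, h₅, h₆⟩ => ⟨h₁, h₂, h₃, h₄, h₅, h₆⟩,
    fun ⟨h₁, h₂, h₃, h₄, h₅, h₆⟩ => ⟨h₁, h₂, h₃, h₄, h₅, h₆⟩⟩

namespace IsOrderIso

variable {α g A : ZFSet} (hg : IsOrderIso α g A)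
include hg

theorem mem_of_pair_mem {x y : ZFSet} (h : ZFSet.pair x y ∈ g) : x ∈ α ∧ y ∈ A := by
  obtain ⟨x', hx', y', hy', hp⟩ := hg.pair_of_mem _ h
  obtain ⟨rfl, rfl⟩ := ZFSet.pair_inj.1 hp
  exact ⟨hx', hy'⟩

theorem injective {x x' y : ZFSet} (hx : ZFSet.pair x y ∈ g)
    (hx' : ZFSet.pair x' y ∈ g) : x = x' := by
  obtain ⟨hxα, hyA⟩ := hg.mem_of_pair_mem hx
  have hx'α := (hg.mem_of_pair_mem hx').1
  rcases (hg.isOrdinal.mem hxα).mem_trichotomous (hg.isOrdinal.mem hx'α) with h | h | h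
  · exact absurd (hg.strictMono x hxα x' hx'α y hyA y hyA hx hx' h) (ZFSet.mem_irrefl y)
  · exact h
  · exact absurd (hg.strictMono x' hx'α x hxα y hyA y hyA hx' hx h) (ZFSet.mem_irrefl y)

theorem subset_of_pair_mem (hA : ∀ y ∈ A, y.IsOrdinal) :
    ∀ x ∈ α, ∀ y, ZFSet.pair x y ∈ g → x ⊆ y := by
  intro x
  induction x using ZFSet.mem_wf.induction with
  | _ x ih =>
  intro hx y hxy η hη
  have hηα := hg.isOrdinal.mem_trans hη hx
  obtain ⟨y', hy'A, hηy'⟩ := hg.total η hηα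
  have hyA := (hg.mem_of_pair_mem hxy).2
  exact (hg.isOrdinal.mem hηα).mem_of_subset_of_mem (hA y hyA) (ih η hη hηα y' hηy')
    (hg.strictMono η hηα x hx y' hy'A y hyA hηy' hxy hη)

theorem subset {κ : ZFSet} (hκ : κ.IsOrdinal) (hAκ : A ⊆ κ) : α ⊆ κ := by
  intro x hx
  obtain ⟨y, hyA, hxy⟩ := hg.total x hx
  exact (hg.isOrdinal.mem hx).mem_of_subset_of_mem hκ
    (hg.subset_of_pair_mem (fun y hy => hκ.mem (hAκ hy)) x hx y hxy) (hAκ hyA)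

end IsOrderIso

/-- For a set `e` of ordinals, `otpBelow e γ` is the order type of `e ∩ γ`. -/
noncomputable def otpBelow (e : ZFSet) : ZFSet → ZFSet :=
  ZFSet.mem_wf.fix fun γ IH => ZFSet.range fun x : ↥(e ∩ γ) => IH x (ZFSet.mem_inter.1 x.2).2

theorem mem_otpBelow {e γ z : ZFSet} :
    z ∈ otpBelow e γ ↔ ∃ x ∈ e, x ∈ γ ∧ otpBelow e x = z := by
  rw [otpBelow, WellFounded.fix_eq, ZFSet.mem_range]
  constructor
  · rintro ⟨⟨x, hx⟩, rfl⟩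
    exact ⟨x, (ZFSet.mem_inter.1 hx).1, (ZFSet.mem_inter.1 hx).2, rfl⟩
  · rintro ⟨x, hxe, hxγ, rfl⟩
    exact ⟨⟨x, ZFSet.mem_inter.2 ⟨hxe, hxγ⟩⟩, rfl⟩

noncomputable def otp (e : ZFSet) : ZFSet := ZFSet.range fun x : ↥e => otpBelow e x

noncomputable def otpIso (e : ZFSet) : ZFSet :=
  ZFSet.range fun x : ↥e => ZFSet.pair (otpBelow e x) x

theorem mem_otp {e z : ZFSet} : z ∈ otp e ↔ ∃ x ∈ e, otpBelow e x = z := by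
  simp [otp]

theorem mem_otpIso {e p : ZFSet} : p ∈ otpIso e ↔ ∃ x ∈ e, ZFSet.pair (otpBelow e x) x = p := by
  simp [otpIso]

section

variable {e : ZFSet} (he : ∀ x ∈ e, x.IsOrdinal)
include he

theorem injOn_otpBelow : Set.InjOn (otpBelow e) e := by
  intro x hx y hy h
  rcases (he x hx).mem_trichotomous (he y hy) with hxy | hxy | hxy
  · have := mem_otpBelow.2 ⟨x, hx, hxy, h⟩
    exact absurd this (ZFSet.mem_irrefl _)
  · exact hxy
  · have := mem_otpBelow.2 ⟨y, hy, hxy, h.symm⟩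
    exact absurd this (ZFSet.mem_irrefl _)

theorem otpBelow_mem_otpBelow {x y : ZFSet} (hx : x ∈ e) :
    otpBelow e x ∈ otpBelow e y ↔ x ∈ y := by
  refine ⟨fun h => ?_, fun h => mem_otpBelow.2 ⟨x, hx, h, rfl⟩⟩
  obtain ⟨x', hx'e, hx'y, hx'⟩ := mem_otpBelow.1 h
  rwa [← injOn_otpBelow he hx'e hx hx']

theorem isTransitive_otpBelow {γ : ZFSet} (hγ : γ ∈ e) : (otpBelow e γ).IsTransitive := by
  intro z hz w hw
  obtain ⟨x, hxe, hxγ, rfl⟩ := mem_otpBelow.1 hz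
  obtain ⟨x', hx'e, hx'x, rfl⟩ := mem_otpBelow.1 hw
  exact mem_otpBelow.2 ⟨x', hx'e, (he γ hγ).mem_trans hx'x hxγ, rfl⟩

theorem isOrdinal_otp : (otp e).IsOrdinal := by
  refine ZFSet.isOrdinal_iff_forall_mem_isTransitive.2 ⟨fun z hz w hw => ?_, fun z hz => ?_⟩
  · obtain ⟨x, hxe, rfl⟩ := mem_otp.1 hz
    obtain ⟨x', hx'e, -, rfl⟩ := mem_otpBelow.1 hw
    exact mem_otp.2 ⟨x', hx'e, rfl⟩
  · obtain ⟨x, hxe, rfl⟩ := mem_otp.1 hz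
    exact isTransitive_otpBelow he hxe

theorem isOrderIso_otp : IsOrderIso (otp e) (otpIso e) e where
  isOrdinal := isOrdinal_otp he
  pair_of_mem p hp := by
    obtain ⟨x, hxe, rfl⟩ := mem_otpIso.1 hp
    exact ⟨_, mem_otp.2 ⟨x, hxe, rfl⟩, x, hxe, rfl⟩
  total ξ hξ := by
    obtain ⟨x, hxe, rfl⟩ := mem_otp.1 hξ
    exact ⟨x, hxe, mem_otpIso.2 ⟨x, hxe, rfl⟩⟩
  surj y hy := ⟨_, mem_otp.2 ⟨y, hy, rfl⟩, mem_otpIso.2 ⟨y, hy, rfl⟩⟩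
  functional ξ _ y _ y' _ h h' := by
    obtain ⟨x, hxe, hx⟩ := mem_otpIso.1 h
    obtain ⟨x', hx'e, hx'⟩ := mem_otpIso.1 h'
    obtain ⟨h₁, rfl⟩ := ZFSet.pair_inj.1 hx
    obtain ⟨h₁', rfl⟩ := ZFSet.pair_inj.1 hx'
    exact injOn_otpBelow he hxe hx'e (h₁.trans h₁'.symm)
  strictMono ξ _ ξ' _ y _ y' _ h h' hξ := by
    obtain ⟨x, hxe, hx⟩ := mem_otpIso.1 h
    obtain ⟨x', hx'e, hx'⟩ := mem_otpIso.1 h'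
    obtain ⟨rfl, rfl⟩ := ZFSet.pair_inj.1 hx
    obtain ⟨rfl, rfl⟩ := ZFSet.pair_inj.1 hx'
    exact (otpBelow_mem_otpBelow he hxe).1 hξ

theorem otp_mem_hset {θ : ZFSet} (heH : e ∈ HSet θ) : otp e ∈ HSet θ := by
  refine mem_hset_of_isTransitive (isOrdinal_otp he).isTransitive ?_
  show Cardinal.mk (otp e : Set ZFSet) < _
  rw [otp, ZFSet.coe_range]
  exact Cardinal.mk_range_le.trans_lt (card_lt_of_mem_hset heH)

end

theorem Prec.exists_isOrderIso {θ : ZFSet} {M : Set ZFSet} (hM : Prec M (HSet θ))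
    (hθ : ℵ₀ ≤ card θ) {A : ZFSet} (hA : A ∈ M) (hAord : ∀ y ∈ A, y.IsOrdinal) :
    ∃ α ∈ M, ∃ g ∈ M, IsOrderIso α g A := by
  have hAH := hM.1 hA
  have hotp := otp_mem_hset hAord hAH
  have hiso : otpIso A ∈ HSet θ := by
    refine mem_hset_of_subset (fun p hp => ?_) (prod_mem_hset hθ hotp hAH)
    obtain ⟨_, hξ, y, hy, rfl⟩ := (isOrderIso_otp hAord).pair_of_mem p hp
    exact ZFSet.pair_mem_prod.2 ⟨hξ, hy⟩
  obtain ⟨α, hαM, g, hgM, h⟩ := hM.exists_mem_delta0₂ isTransClass_hset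
    isOrderIsoFormula (v := ![A]) (by simp [hA])
    ⟨otp A, hotp, otpIso A, hiso, realize_isOrderIsoFormula.2 (isOrderIso_otp hAord)⟩
  exact ⟨α, hαM, g, hgM, realize_isOrderIsoFormula.1 h⟩

end OrderType

/-! ### The ordinal `M ∩ κ_M` -/

noncomputable def traceSet (M : Set ZFSet) (x : ZFSet) : ZFSet := ZFSet.sep (· ∈ M) x

theorem mem_traceSet {M : Set ZFSet} {x z : ZFSet} : z ∈ traceSet M x ↔ z ∈ x ∧ z ∈ M :=
  ZFSet.mem_sep

theorem coe_traceSet {M : Set ZFSet} {x : ZFSet} : (traceSet M x : Set ZFSet) = M ∩ x := by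
  ext z
  exact mem_traceSet.trans and_comm

namespace KappaSpec

variable {M : Set ZFSet} {κ : ZFSet} (hκ : KappaSpec M κ)
include hκ

theorem isOrdinal : κ.IsOrdinal := isOrd_iff_isOrdinal.1 hκ.1

theorem subset_of_mem {a : ZFSet} (haM : a ∈ M) (haκ : a ∈ κ) : (a : Set ZFSet) ⊆ M := by
  by_contra h
  obtain ⟨β, hβa, hβM⟩ := Set.not_subset.1 h
  rcases hκ.2.2.2 a (isOrd_iff_isOrdinal.2 (hκ.isOrdinal.mem haκ)) haM ⟨β, hβa, hβM⟩
    with h | rfl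
  · exact ZFSet.mem_asymm haκ h
  · exact ZFSet.mem_irrefl _ haκ

theorem isOrdinal_traceSet : (traceSet M κ).IsOrdinal := by
  refine ZFSet.isOrdinal_iff_forall_mem_isOrdinal.2 ⟨fun z hz w hw => ?_, fun z hz => ?_⟩
  · obtain ⟨hzκ, hzM⟩ := mem_traceSet.1 hz
    exact mem_traceSet.2 ⟨hκ.isOrdinal.mem_trans hw hzκ, hκ.subset_of_mem hzM hzκ hw⟩
  · exact hκ.isOrdinal.mem (mem_traceSet.1 hz).1

theorem traceSet_mem : traceSet M κ ∈ κ := by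
  refine ((hκ.isOrdinal_traceSet.subset_iff_eq_or_mem hκ.isOrdinal).1
    fun z hz => (mem_traceSet.1 hz).1).resolve_left fun h => ?_
  obtain ⟨β, hβκ, hβM⟩ := hκ.2.2.1
  exact hβM (mem_traceSet.1 (h.symm ▸ hβκ)).2

theorem traceSet_notMem : traceSet M κ ∉ M :=
  fun h => ZFSet.mem_irrefl _ (mem_traceSet.2 ⟨hκ.traceSet_mem, h⟩)

theorem mem_traceSet_of_subset {x : ZFSet} (hx : x.IsOrdinal) (hxM : x ∈ M)
    (hxμ : x ⊆ traceSet M κ) : x ∈ traceSet M κ :=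
  ((hx.subset_iff_eq_or_mem hκ.isOrdinal_traceSet).1 hxμ).resolve_left
    fun h => hκ.traceSet_notMem (h ▸ hxM)

theorem omega_subset_traceSet {θ : ZFSet} (hθ : ℵ₀ ≤ card θ) (hM : Prec M (HSet θ)) :
    ZFSet.omega ⊆ traceSet M κ := by
  have hnat : ∀ n : ℕ, Ordinal.toZFSet n ∈ traceSet M κ := by
    intro n
    induction n with
    | zero =>
      rw [Nat.cast_zero, Ordinal.toZFSet_zero]
      exact hκ.mem_traceSet_of_subset ZFSet.isOrdinal_empty (hM.empty_mem hθ)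
        fun z hz => absurd hz (ZFSet.notMem_empty z)
    | succ n ih =>
      rw [Nat.cast_succ, Ordinal.toZFSet_add_one]
      refine hκ.mem_traceSet_of_subset (ZFSet.isOrdinal_succ (ZFSet.isOrdinal_toZFSet _))
        (hM.insert_mem hθ (mem_traceSet.1 ih).2 (mem_traceSet.1 ih).2) fun z hz => ?_
      rcases ZFSet.mem_insert_iff.1 hz with rfl | hz
      · exact ih
      · exact hκ.isOrdinal_traceSet.mem_trans hz ih
  intro z hz
  obtain ⟨n, rfl⟩ := mem_omega_iff.1 hz
  exact hnat n

end KappaSpec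

section GuessingModel

open Delta0

variable {θ : ZFSet} {M : Set ZFSet} (hθ : ℵ₀ ≤ card θ) (hM : Prec M (HSet θ))
include hθ hM

theorem GuessingModel.range_mem (hG : GuessingModel M ℵ₀) {b X : ZFSet} (hb : b ∈ M)
    (hbM : (b : Set ZFSet) ⊆ M) (hX : X ∈ M) (f : b → ZFSet) (hfX : ∀ x, f x ∈ X)
    (hfM : ∀ x, f x ∈ M) : ZFSet.range f ∈ M := by
  let d := ZFSet.sep (fun p => ∃ x : b, p = ZFSet.pair x (f x)) (ZFSet.prod b X)
  have hdM : (d : Set ZFSet) ⊆ M := by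
    rintro _ hp
    obtain ⟨-, x, rfl⟩ := ZFSet.mem_sep.1 hp
    exact hM.pair_mem hθ (hbM x.2) (hfM x)
  have hxd : ∀ x : b, ZFSet.pair x (f x) ∈ d := fun x =>
    ZFSet.mem_sep.2 ⟨ZFSet.pair_mem_prod.2 ⟨x.2, hfX x⟩, x, rfl⟩
  obtain ⟨e, heM, -, he⟩ := hG _ (hM.prod_mem hθ hb hX) d (fun _ hp => (ZFSet.mem_sep.1 hp).1)
    (hM.approx_of_subset hθ hdM)
  have hxe : ∀ x : b, ZFSet.pair x (f x) ∈ e := fun x => (he _ (hdM (hxd x))).2 (hxd x)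
  -- In `M` the only value of `e` at `x` is `f x`; by elementarity it has no other value at all.
  have hfun : ∀ x : b, ∀ y, ZFSet.pair x y ∈ e → y = f x := by
    refine fun x y hxy => hM.eq_of_pair_mem heM (hbM x.2) (hfM x) (fun y' hy'M hy' => ?_) hxy
    obtain ⟨-, x', hx'⟩ := ZFSet.mem_sep.1 ((he _ (hM.pair_mem hθ (hbM x.2) hy'M)).1 hy')
    obtain ⟨hxx', rfl⟩ := ZFSet.pair_inj.1 hx'
    rw [Subtype.ext hxx']
  have hrange : ZFSet.range f =
      ZFSet.sep (fun y => (bex 1 (pairMem 3 0 1)).Realize ![y, b, e]) X := by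
    ext y
    simp only [ZFSet.mem_range, ZFSet.mem_sep, realize_bex, realize_pairMem, Matrix.cons_val]
    refine ⟨?_, fun ⟨_, x, hx, hxy⟩ => ⟨⟨x, hx⟩, (hfun ⟨x, hx⟩ y hxy).symm⟩⟩
    rintro ⟨x, rfl⟩
    exact ⟨hfX x, x, x.2, hxe x⟩
  rw [hrange]
  exact hM.sep_mem _ (by simp [Fin.forall_fin_succ, hb, heM]) hX

variable {κ : ZFSet} (hκ : KappaSpec M κ)
include hκ

theorem subset_or_isOrderIso {A : ZFSet} (hA : A ∈ M) (hAκ : A ⊆ κ) :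
    (A : Set ZFSet) ⊆ M ∨ ∃ g ∈ M, IsOrderIso κ g A := by
  obtain ⟨α, hαM, g, hgM, hg⟩ :=
    hM.exists_isOrderIso hθ hA fun y hy => hκ.isOrdinal.mem (hAκ hy)
  rcases (hg.isOrdinal.subset_iff_eq_or_mem hκ.isOrdinal).1 (hg.subset hκ.isOrdinal hAκ)
    with rfl | hακ
  · exact Or.inr ⟨g, hgM, hg⟩
  · refine Or.inl fun y hy => ?_
    obtain ⟨ξ, hξ, hξy⟩ := hg.surj y hy
    exact hM.mem_of_pair_mem hgM (hκ.subset_of_mem hαM hακ hξ) hξy fun y' hy' =>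
      hg.functional ξ hξ y' (hg.mem_of_pair_mem hy').2 y hy hy' hξy

variable (hG : GuessingModel M ℵ₀)
include hG

theorem card_lt_card_traceSet {b : ZFSet} (hb : b ∈ traceSet M κ) :
    card b < card (traceSet M κ) := by
  obtain ⟨hbκ, hbM⟩ := mem_traceSet.1 hb
  refine (Cardinal.mk_le_mk_of_subset
    (hκ.isOrdinal_traceSet.isTransitive.subset_of_mem hb)).lt_of_ne fun hcard => ?_
  obtain ⟨E⟩ := Cardinal.eq.1 hcard
  have hrange : ZFSet.range (fun x : b => (E x).1) = traceSet M κ := by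
    ext y
    simp only [ZFSet.mem_range]
    exact ⟨fun ⟨x, hx⟩ => hx ▸ (E x).2, fun hy => ⟨E.symm ⟨y, hy⟩, by simp⟩⟩
  exact hκ.traceSet_notMem <| hrange ▸ hG.range_mem hθ hM hbM (hκ.subset_of_mem hbM hbκ)
    hκ.2.1 _ (fun x => (mem_traceSet.1 (E x).2).1) fun x => (mem_traceSet.1 (E x).2).2

theorem mk_eq_card_traceSet {s : Set ZFSet} (hs : CofinalSetIn s (traceSet M κ)) :
    Cardinal.mk s = card (traceSet M κ) := by
  have hsM : s ⊆ M := fun γ hγ => (mem_traceSet.1 (hs.1 γ hγ)).2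
  obtain ⟨e, heM, heκ, he⟩ := hG κ hκ.2.1 (ZFSet.sep (· ∈ s) κ)
    (fun _ h => (ZFSet.mem_sep.1 h).1) (hM.approx_of_subset hθ fun _ h => hsM (ZFSet.mem_sep.1 h).2)
  have hes : ∀ γ ∈ M, γ ∈ e ↔ γ ∈ s := fun γ hγ =>
    (he γ hγ).trans ⟨fun h => (ZFSet.mem_sep.1 h).2,
      fun h => ZFSet.mem_sep.2 ⟨(mem_traceSet.1 (hs.1 γ h)).1, h⟩⟩
  have hunbdd : ¬ (e : Set ZFSet) ⊆ M := by
    intro heM'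
    obtain ⟨b, hbM, hbκ, heb⟩ := hM.exists_mem_bound hκ.2.1 heM
      ⟨_, hκ.traceSet_mem, fun γ hγ => mem_traceSet.2 ⟨heκ hγ, heM' hγ⟩⟩
    obtain ⟨γ, hγs, hbγ⟩ := hs.2 b (mem_traceSet.2 ⟨hbκ, hbM⟩)
    have hγb : γ ∈ b := heb ((hes γ (hsM hγs)).2 hγs)
    rcases hbγ with h | rfl
    · exact ZFSet.mem_asymm h hγb
    · exact ZFSet.mem_irrefl _ hγb
  obtain ⟨g, hgM, hg⟩ := (subset_or_isOrderIso hθ hM hκ heM heκ).resolve_left hunbdd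
  have hval : ∀ ξ : traceSet M κ, ∃ γ ∈ s, ZFSet.pair ξ.1 γ ∈ g := fun ⟨ξ, hξ⟩ => by
    obtain ⟨hξκ, hξM⟩ := mem_traceSet.1 hξ
    obtain ⟨γ, hγe, hξγ⟩ := hg.total ξ hξκ
    refine ⟨γ, (hes γ ?_).1 hγe, hξγ⟩
    exact hM.mem_of_pair_mem hgM hξM hξγ fun γ' hξγ' =>
      hg.functional ξ hξκ γ' (hg.mem_of_pair_mem hξγ').2 γ hγe hξγ' hξγ
  choose f hfs hfg using hval
  refine le_antisymm (Cardinal.mk_le_mk_of_subset hs.1) ?_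
  refine Cardinal.mk_le_of_injective (f := fun ξ => (⟨f ξ, hfs ξ⟩ : s)) fun ξ ξ' h => ?_
  have hff : f ξ = f ξ' := congrArg Subtype.val h
  exact Subtype.ext (hg.injective (hfg ξ) (hff ▸ hfg ξ'))

end GuessingModel

/-- Part of Proposition 2.2(5): if `M ≺ H_θ` is an `ℵ₀`-guessing model then
`M ∩ κ_M` is a regular cardinal. -/
theorem inter_kappaM_regular (θ : ZFSet) (hθ : IsRegCard θ)
    (M : Set ZFSet) (hM : Prec M (HSet θ)) (κ : ZFSet) (hκ : KappaSpec M κ)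
    (hG : GuessingModel M ℵ₀) :
    ∃ μ : ZFSet, IsRegCard μ ∧ μ.toSet = M ∩ κ.toSet := by
  have hθ' := hθ.aleph0_le_card
  exact ⟨traceSet M κ,
    ⟨⟨isOrd_iff_isOrdinal.2 hκ.isOrdinal_traceSet, fun b => card_lt_card_traceSet hθ' hM hκ hG⟩,
      hκ.omega_subset_traceSet hθ' hM, fun s => mk_eq_card_traceSet hθ' hM hκ hG⟩,
    coe_traceSet⟩

end GuessingModels
end

section
/- M ≺ V_λ is an ℵ₀-guessing model if and only if its transitive collapse is V_γ for some ordinal γ. -/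
open Cardinal

namespace GuessingModels

/-!
Let `π` be the collapse of `M` and `N = π[M]`. Every finite member of `M` has all its subsets in
`M`, so every `d` is `(ℵ₀, M)`-approximated; hence if `M` is guessing, each `s ⊆ π x` is `π e` for
a guess `e ∈ M` of `{z ∈ x ∩ M | π z ∈ s}`. Thus `N` contains all subsets of its members, and
formulas whose quantifiers are bounded by `∈` and `⊆` mean the same in `N` as in `V_λ`.
"`x ⊆ V_α` for some `α`" is such a formula once `V_α` is certified by the chain `{V_β | β < α}`.
It holds of every `x ∈ V_λ`, so by elementarity and the isomorphism `π` it holds in `N`; and a set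
closed under subsets in which every member lies below a member `V_α` is itself a `V_γ`.

Conversely, if `N = V_γ`, then `π[d ∩ M] ⊆ π X` lies in `N`, so it is `π e'` for some `e' ∈ M`,
and `e' ∩ X ∈ M` guesses `d`.
-/

universe u v

namespace SF

def and {n} (f g : SF n) : SF n := .not (.imp f (.not g))
def or {n} (f g : SF n) : SF n := .imp (.not f) g
def iff {n} (f g : SF n) : SF n := (f.imp g).and (g.imp f)
def all {n} (f : SF (n + 1)) : SF n := .not (.ex (.not f))
def subset {n} (i j : Fin n) : SF n := all ((mem 0 i.succ).imp (mem 0 j.succ))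

def rename : ∀ {n m}, (Fin n → Fin m) → SF n → SF m
  | _, _, ρ, .mem i j => .mem (ρ i) (ρ j)
  | _, _, ρ, .eq i j => .eq (ρ i) (ρ j)
  | _, _, ρ, .imp f g => .imp (rename ρ f) (rename ρ g)
  | _, _, ρ, .not f => .not (rename ρ f)
  | _, _, ρ, .ex f => .ex (rename (Fin.cases 0 fun i => (ρ i).succ) f)

end SF

section Realize

variable {S : Set ZFSet.{u}} {n : ℕ}

@[simp] theorem realize_mem (i j : Fin n) (v : Fin n → ZFSet) :
    Realize S (.mem i j) v ↔ v i ∈ v j := Iff.rfl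

@[simp] theorem realize_eq (i j : Fin n) (v : Fin n → ZFSet) :
    Realize S (.eq i j) v ↔ v i = v j := Iff.rfl

@[simp] theorem realize_imp (f g : SF n) (v : Fin n → ZFSet) :
    Realize S (f.imp g) v ↔ (Realize S f v → Realize S g v) := Iff.rfl

@[simp] theorem realize_not (f : SF n) (v : Fin n → ZFSet) :
    Realize S f.not v ↔ ¬ Realize S f v := Iff.rfl

@[simp] theorem realize_ex (f : SF (n + 1)) (v : Fin n → ZFSet) :
    Realize S f.ex v ↔ ∃ x ∈ S, Realize S f (Fin.cons x v) := Iff.rfl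

@[simp] theorem realize_and (f g : SF n) (v : Fin n → ZFSet) :
    Realize S (f.and g) v ↔ Realize S f v ∧ Realize S g v := by
  simp only [SF.and, realize_not, realize_imp, Classical.not_imp, not_not]

@[simp] theorem realize_or (f g : SF n) (v : Fin n → ZFSet) :
    Realize S (f.or g) v ↔ Realize S f v ∨ Realize S g v := by
  simp only [SF.or, realize_not, realize_imp, or_iff_not_imp_left]

@[simp] theorem realize_iff (f g : SF n) (v : Fin n → ZFSet) :
    Realize S (f.iff g) v ↔ (Realize S f v ↔ Realize S g v) := by
  simp only [SF.iff, realize_and, realize_imp, iff_def]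

@[simp] theorem realize_all (f : SF (n + 1)) (v : Fin n → ZFSet) :
    Realize S f.all v ↔ ∀ x ∈ S, Realize S f (Fin.cons x v) := by
  simp only [SF.all, realize_not, realize_ex, not_exists, not_and, not_not]

@[simp] theorem realize_subset (i j : Fin n) (v : Fin n → ZFSet) :
    Realize S (SF.subset i j) v ↔ ∀ x ∈ S, x ∈ v i → x ∈ v j := by
  simp [SF.subset]

theorem realize_rename : ∀ {n m : ℕ} (ρ : Fin n → Fin m) (f : SF n) (v : Fin m → ZFSet),
    Realize S (f.rename ρ) v ↔ Realize S f (v ∘ ρ)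
  | _, _, _, .mem _ _, _ => Iff.rfl
  | _, _, _, .eq _ _, _ => Iff.rfl
  | _, _, ρ, .imp f g, v => imp_congr (realize_rename ρ f v) (realize_rename ρ g v)
  | _, _, ρ, .not f, v => not_congr (realize_rename ρ f v)
  | _, _, ρ, .ex f, v => by
    simp only [SF.rename, realize_ex, realize_rename]
    refine exists_congr fun x => and_congr_right fun _ => iff_of_eq (congrArg _ ?_)
    funext i
    cases i using Fin.cases <;> simp

theorem realize_image_iff {M : Set ZFSet.{u}} {π : ZFSet.{u} → ZFSet.{v}} (hinj : M.InjOn π)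
    (hmem : ∀ x ∈ M, ∀ y ∈ M, x ∈ y ↔ π x ∈ π y) :
    ∀ {n} (φ : SF n) (v : Fin n → ZFSet.{u}), (∀ i, v i ∈ M) →
      (Realize (π '' M) φ (π ∘ v) ↔ Realize M φ v)
  | _, .mem i j, v, hv => (hmem _ (hv i) _ (hv j)).symm
  | _, .eq i j, v, hv => hinj.eq_iff (hv i) (hv j)
  | _, .imp f g, v, hv =>
    imp_congr (realize_image_iff hinj hmem f v hv) (realize_image_iff hinj hmem g v hv)
  | _, .not f, v, hv => not_congr (realize_image_iff hinj hmem f v hv)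
  | _, .ex f, v, hv => by
    simp only [realize_ex, Set.exists_mem_image, ← Fin.comp_cons]
    refine exists_congr fun x => and_congr_right fun hx => realize_image_iff hinj hmem f _ ?_
    intro i
    cases i using Fin.cases <;> simp [hx, hv]

end Realize

structure Supertransitive (S : Set ZFSet.{u}) : Prop where
  mem_of_mem : ∀ y ∈ S, ∀ x ∈ y, x ∈ S
  mem_of_subset : ∀ y ∈ S, ∀ x ⊆ y, x ∈ S

theorem supertransitive_VSet (lam : ZFSet.{u}) : Supertransitive (VSet lam) where
  mem_of_mem _ hy _ hx := (ZFSet.rank_lt_of_mem hx).trans hy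
  mem_of_subset _ hy _ hx := (ZFSet.rank_mono hx).trans_lt hy

theorem Supertransitive.forall_mem_imp_iff_subset {S : Set ZFSet.{u}} (hS : Supertransitive S)
    {x y : ZFSet.{u}} (hx : x ∈ S) : (∀ z ∈ S, z ∈ x → z ∈ y) ↔ x ⊆ y :=
  ⟨fun h z hz => h z (hS.mem_of_mem x hx z hz) hz, fun h _ _ hz => h hz⟩

def IsExtensional (M : Set ZFSet.{u}) : Prop :=
  ∀ x ∈ M, ∀ y ∈ M, (∀ z ∈ M, z ∈ x ↔ z ∈ y) → x = y

namespace Prec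

variable {M R : Set ZFSet.{u}}

theorem exists_mem_of_realize_ex (hM : Prec M R) {n} {φ : SF (n + 1)} {v : Fin n → ZFSet}
    (hv : ∀ i, v i ∈ M) (h : Realize R φ.ex v) : ∃ x ∈ M, Realize R φ (Fin.cons x v) := by
  obtain ⟨x, hx, hφ⟩ := (hM.2 φ.ex v hv).2 h
  refine ⟨x, hx, (hM.2 φ _ fun i => ?_).1 hφ⟩
  cases i using Fin.cases <;> simp [hx, hv]

theorem isExtensional (hM : Prec M R) (hR : Supertransitive R) : IsExtensional M := by
  intro x hx y hy h
  have hxy : Realize M (SF.all (SF.iff (.mem 0 1) (.mem 0 2))) ![x, y] := by simpa using h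
  rw [hM.2 _ _ (by simp [Fin.forall_fin_two, hx, hy])] at hxy
  simp only [realize_all, realize_iff, realize_mem] at hxy
  exact ZFSet.ext fun z => ⟨fun hz => (hxy z (hR.mem_of_mem x (hM.1 hx) z hz)).1 hz,
    fun hz => (hxy z (hR.mem_of_mem y (hM.1 hy) z hz)).2 hz⟩

theorem definable_sep_mem (hM : Prec M R) (hR : Supertransitive R) {n} (φ : SF (n + 1))
    {v : Fin n → ZFSet} (hv : ∀ i, v i ∈ M) {Z D : ZFSet} (hZ : Z ∈ M)
    (hD : ∀ t, t ∈ D ↔ t ∈ Z ∧ Realize R φ (Fin.cons t v)) : D ∈ M := by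
  have hshift : ∀ t y : ZFSet, (Fin.cons t (Fin.cons y (Fin.cons Z v)) : Fin (n + 3) → ZFSet) ∘
      Fin.cases 0 (fun i => i.succ.succ.succ) = Fin.cons t v := by
    intro t y
    funext i
    cases i using Fin.cases <;> simp
  have hdef : ∀ y, Realize R (SF.all (SF.iff (.mem 0 1)
      ((SF.mem 0 (Fin.succ 1)).and (φ.rename (Fin.cases 0 fun i => i.succ.succ.succ)))))
      (Fin.cons y (Fin.cons Z v)) ↔ ∀ t ∈ R, t ∈ y ↔ t ∈ Z ∧ Realize R φ (Fin.cons t v) := by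
    intro y
    simp only [realize_all, realize_iff, realize_mem, realize_and, realize_rename, hshift,
      Fin.cons_zero, Fin.cons_one, Fin.cons_succ]
  have hDR : D ∈ R := hR.mem_of_subset Z (hM.1 hZ) D fun t ht => ((hD t).1 ht).1
  obtain ⟨y, hyM, hy⟩ := hM.exists_mem_of_realize_ex (v := Fin.cons Z v)
    (fun i => by cases i using Fin.cases <;> simp [hZ, hv])
    ((realize_ex _ _).2 ⟨D, hDR, (hdef D).2 fun t _ => hD t⟩)
  rw [hdef] at hy
  have : y = D := ZFSet.ext fun t => by
    constructor
    · intro ht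
      exact (hD t).2 ((hy t (hR.mem_of_mem y (hM.1 hyM) t ht)).1 ht)
    · intro ht
      exact (hy t (hR.mem_of_mem D hDR t ht)).2 ((hD t).1 ht)
  exact this ▸ hyM

theorem mem_of_subset_of_finite (hM : Prec M R) (hR : Supertransitive R) {Z : ZFSet}
    (hZ : Z ∈ M) (hfin : Z.toSet.Finite) {W : ZFSet} (hW : W ⊆ Z) : W ∈ M := by
  obtain ⟨n, hn⟩ : ∃ n, Z.toSet.ncard = n := ⟨_, rfl⟩
  induction n generalizing Z W with
  | zero =>
    have hZe : Z.toSet = ∅ := (Set.ncard_eq_zero hfin).1 hn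
    have : W = Z := ZFSet.ext fun t =>
      ⟨fun ht => hW ht, fun ht => absurd (show t ∈ Z.toSet from ht) (hZe ▸ Set.notMem_empty t)⟩
    exact this ▸ hZ
  | succ n ih =>
    -- For `u ∈ Z ∩ M`, `W ∖ {u}` is in `M` by induction and `W = {t ∈ Z | t ∈ W ∖ {u} ∨ t = u}`.
    obtain ⟨u₀, hu₀⟩ := Set.nonempty_of_ncard_ne_zero (hn.trans_ne n.succ_ne_zero)
    obtain ⟨u, huM, huZ⟩ := hM.exists_mem_of_realize_ex (φ := .mem 0 1) (v := ![Z])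
      (by simp [hZ]) ⟨u₀, hR.mem_of_mem Z (hM.1 hZ) u₀ hu₀, by simpa using show u₀ ∈ Z from hu₀⟩
    simp only [realize_mem, Fin.cons_zero, Fin.cons_one, Matrix.cons_val_zero] at huZ
    have hparam : ∀ i, ![u] i ∈ M := by simp [huM]
    have hZ'M : Z.sep (· ≠ u) ∈ M :=
      hM.definable_sep_mem hR (.not (.eq 0 1)) hparam hZ (by simp [ZFSet.mem_sep])
    have hZ'set : (Z.sep (· ≠ u)).toSet = Z.toSet \ {u} := by
      ext t; exact ZFSet.mem_sep
    have hW'M : W.sep (· ≠ u) ∈ M := by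
      refine ih hZ'M (hZ'set ▸ hfin.sdiff) (fun t ht => ?_) ?_
      · simp only [ZFSet.mem_sep] at ht ⊢
        exact ⟨hW ht.1, ht.2⟩
      · rw [hZ'set, Set.ncard_sdiff_singleton_of_mem (s := Z.toSet) huZ, hn, Nat.add_sub_cancel]
    by_cases huW : u ∈ W
    · refine hM.definable_sep_mem hR ((SF.mem 0 1).or (.eq 0 2)) (v := ![W.sep (· ≠ u), u])
        (by simp [Fin.forall_fin_two, hW'M, huM]) hZ fun t => ?_
      by_cases htu : t = u
      · simp [htu, huW, huZ]
      · simpa [htu] using fun ht => hW ht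
    · have : W.sep (· ≠ u) = W := ZFSet.ext fun t => by
        simp only [ZFSet.mem_sep]
        exact ⟨And.left, fun ht => ⟨ht, fun h => huW (h ▸ ht)⟩⟩
      exact this ▸ hW'M

theorem approx_aleph0 {M R : Set ZFSet.{0}} (hM : Prec M R) (hR : Supertransitive R)
    (d : ZFSet) : Approx M ℵ₀ d := fun _ hZ hcard =>
  hM.mem_of_subset_of_finite hR hZ (Cardinal.lt_aleph0_iff_set_finite.1 hcard)
    fun _ ht => (ZFSet.mem_inter.1 ht).2

end Prec

open scoped ZFSet

/-- `C = {V_β | β < α}` witnesses `z = V_α` through `V_α = ⋃_{β < α} 𝒫 V_β`; this makes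
`z = V_α` expressible by a formula with quantifiers bounded by `∈` and `⊆`. -/
def IsVChain (z C : ZFSet.{u}) : Prop :=
  ∀ c ∈ insert z C, ∀ w, w ∈ c ↔ ∃ c' ∈ C, c' ∈ c ∧ w ⊆ c'

theorem IsVChain.eq_vonNeumann {z C : ZFSet.{u}} (h : IsVChain z C) : z = V_ z.rank := by
  suffices ∀ c ∈ insert z C, c = V_ c.rank from this z (ZFSet.mem_insert z C)
  intro c
  induction c using ZFSet.inductionOn with
  | _ c ih =>
    intro hc
    ext w
    rw [h c hc w, ZFSet.mem_vonNeumann]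
    constructor
    · rintro ⟨c', -, hc'c, hwc'⟩
      exact (ZFSet.rank_mono hwc').trans_lt (ZFSet.rank_lt_of_mem hc'c)
    · intro hw
      obtain ⟨y, hyc, hwy⟩ := ZFSet.lt_rank_iff.1 hw
      obtain ⟨c', hc'C, hc'c, hyc'⟩ := (h c hc y).1 hyc
      refine ⟨c', hc'C, hc'c, ?_⟩
      rw [ih c' hc'c (ZFSet.mem_insert_of_mem _ hc'C), ZFSet.subset_vonNeumann]
      exact hwy.trans (ZFSet.rank_mono hyc')

theorem isVChain_vonNeumann (o : Ordinal.{u}) :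
    IsVChain (V_ o) ((V_ o).sep fun c => ∃ β, c = V_ β) := by
  intro c hc w
  obtain ⟨α, hαo, rfl⟩ : ∃ α ≤ o, c = V_ α := by
    rcases ZFSet.mem_insert_iff.1 hc with rfl | hc
    · exact ⟨o, le_rfl, rfl⟩
    · obtain ⟨hco, β, rfl⟩ := ZFSet.mem_sep.1 hc
      exact ⟨β, (ZFSet.vonNeumann_mem_vonNeumann_iff.1 hco).le, rfl⟩
  rw [ZFSet.mem_vonNeumann']
  constructor
  · rintro ⟨β, hβ, hw⟩
    exact ⟨V_ β, ZFSet.mem_sep.2 ⟨ZFSet.vonNeumann_mem_of_lt (hβ.trans_le hαo), β, rfl⟩,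
      ZFSet.vonNeumann_mem_of_lt hβ, hw⟩
  · rintro ⟨c', hc', hc'α, hw⟩
    obtain ⟨-, β, rfl⟩ := ZFSet.mem_sep.1 hc'
    exact ⟨β, ZFSet.vonNeumann_mem_vonNeumann_iff.1 hc'α, hw⟩

theorem eq_vonNeumann_rank {N : ZFSet.{u}} (hsub : ∀ y ∈ N, ∀ s ⊆ y, s ∈ N)
    (hV : ∀ y ∈ N, ∃ o, V_ o ∈ N ∧ y ⊆ V_ o) : N = V_ N.rank := by
  ext w
  rw [ZFSet.mem_vonNeumann]
  refine ⟨ZFSet.rank_lt_of_mem, fun hw => ?_⟩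
  obtain ⟨y, hyN, hwy⟩ := ZFSet.lt_rank_iff.1 hw
  obtain ⟨o, hoN, hyo⟩ := hV y hyN
  exact hsub _ hoN w (ZFSet.subset_vonNeumann.2 (hwy.trans (ZFSet.subset_vonNeumann.1 hyo)))

namespace SF

def vChain {n} (z C : Fin n) : SF n :=
  all (((eq 0 z.succ).or (mem 0 C.succ)).imp (all ((mem 0 1).iff
    (ex ((mem 0 C.succ.succ.succ).and ((mem 0 (Fin.succ 1)).and (subset 1 0)))))))

def subsetVonNeumann {n} (i : Fin n) : SF n :=
  ex ((subset i.succ 0).and (ex (vChain 1 0)))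

end SF

section Supertransitive

variable {S : Set ZFSet.{u}} (hS : Supertransitive S)
include hS

theorem realize_vChain {n} (z C : Fin n) (v : Fin n → ZFSet) (hz : v z ∈ S) (hC : v C ∈ S) :
    Realize S (SF.vChain z C) v ↔ IsVChain (v z) (v C) := by
  have hbounded : ∀ w ∈ S, ∀ c : ZFSet,
      (∃ c' ∈ S, c' ∈ v C ∧ c' ∈ c ∧ ∀ x ∈ S, x ∈ w → x ∈ c') ↔ ∃ c' ∈ v C, c' ∈ c ∧ w ⊆ c' := by
    intro w hw c
    constructor
    · rintro ⟨c', -, hc'C, hc'c, hwc'⟩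
      exact ⟨c', hc'C, hc'c, (hS.forall_mem_imp_iff_subset hw).1 hwc'⟩
    · rintro ⟨c', hc'C, hc'c, hwc'⟩
      exact ⟨c', hS.mem_of_mem _ hC c' hc'C, hc'C, hc'c, fun _ _ hx => hwc' hx⟩
  simp only [SF.vChain, realize_all, realize_imp, realize_or, realize_eq, realize_mem,
    realize_iff, realize_ex, realize_and, realize_subset, Fin.cons_zero, Fin.cons_one,
    Fin.cons_succ]
  constructor
  · intro h c hc w
    have hcS : c ∈ S := by
      rcases ZFSet.mem_insert_iff.1 hc with rfl | hc
      exacts [hz, hS.mem_of_mem _ hC c hc]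
    constructor
    · intro hw
      have hwS := hS.mem_of_mem c hcS w hw
      exact (hbounded w hwS c).1 ((h c hcS (ZFSet.mem_insert_iff.1 hc) w hwS).1 hw)
    · rintro ⟨c', hc'C, hc'c, hwc'⟩
      have hwS := hS.mem_of_subset c' (hS.mem_of_mem _ hC c' hc'C) w hwc'
      exact (h c hcS (ZFSet.mem_insert_iff.1 hc) w hwS).2
        ((hbounded w hwS c).2 ⟨c', hc'C, hc'c, hwc'⟩)
  · intro h c _ hc w hwS
    rw [h c (ZFSet.mem_insert_iff.2 hc) w, hbounded w hwS c]

theorem realize_subsetVonNeumann {n} (i : Fin n) (v : Fin n → ZFSet) (hi : v i ∈ S) :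
    Realize S (SF.subsetVonNeumann i) v ↔ ∃ z ∈ S, v i ⊆ z ∧ ∃ C ∈ S, IsVChain z C := by
  simp only [SF.subsetVonNeumann, realize_ex, realize_and, realize_subset, Fin.cons_zero,
    Fin.cons_succ]
  refine exists_congr fun z => and_congr_right fun hz =>
    and_congr (hS.forall_mem_imp_iff_subset hi) (exists_congr fun C => and_congr_right fun hC => ?_)
  have := realize_vChain hS 1 0 (Fin.cons C (Fin.cons z v)) (by simpa using hz) (by simpa using hC)
  rwa [Fin.cons_one, Fin.cons_zero, Fin.cons_zero] at this

end Supertransitive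

theorem realize_subsetVonNeumann_VSet {lam x : ZFSet.{u}} (hx : x ∈ VSet lam) :
    Realize (VSet lam) (SF.subsetVonNeumann 0) ![x] := by
  have hrank : x.rank < lam.rank := hx
  rw [realize_subsetVonNeumann (supertransitive_VSet lam) 0 _ (by simpa using hx)]
  refine ⟨V_ x.rank, ?_, ZFSet.subset_vonNeumann_self x, _, ?_, isVChain_vonNeumann _⟩
  · show (V_ x.rank).rank < lam.rank
    rwa [ZFSet.rank_vonNeumann]
  · show (ZFSet.sep _ _).rank < lam.rank
    exact (ZFSet.rank_mono ZFSet.sep_subset).trans_lt (by rwa [ZFSet.rank_vonNeumann])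

instance small_lift_coe (x : ZFSet.{u}) : Small.{max u v} x := small_lift _

/-- The target universe is left free because the theorem asks for the collapse of
`M ⊆ ZFSet.{0}` in an arbitrary universe. -/
noncomputable def collapse (M : Set ZFSet.{u}) : ZFSet.{u} → ZFSet.{max u v} :=
  ZFSet.mem_wf.fix fun x rec =>
    ZFSet.range fun z : ZFSet.sep (· ∈ M) x => rec z (ZFSet.mem_sep.1 z.2).1

section Collapse

variable {M : Set ZFSet.{u}}

theorem mem_collapse {x : ZFSet.{u}} {y : ZFSet.{max u v}} :
    y ∈ collapse.{u, v} M x ↔ ∃ z ∈ x, z ∈ M ∧ collapse.{u, v} M z = y := by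
  rw [collapse, WellFounded.fix_eq, ZFSet.mem_range]
  constructor
  · rintro ⟨⟨z, hz⟩, rfl⟩
    exact ⟨z, (ZFSet.mem_sep.1 hz).1, (ZFSet.mem_sep.1 hz).2, rfl⟩
  · rintro ⟨z, hzx, hzM, rfl⟩
    exact ⟨⟨z, ZFSet.mem_sep.2 ⟨hzx, hzM⟩⟩, rfl⟩

theorem collapse_mem_collapse {x z : ZFSet.{u}} (hzx : z ∈ x) (hzM : z ∈ M) :
    collapse.{u, v} M z ∈ collapse.{u, v} M x :=
  mem_collapse.2 ⟨z, hzx, hzM, rfl⟩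

theorem mem_collapse_iff_mem_image {x : ZFSet.{u}} (hM : M ⊆ x.toSet) {y : ZFSet.{max u v}} :
    y ∈ collapse.{u, v} M x ↔ y ∈ collapse.{u, v} M '' M := by
  rw [mem_collapse]
  exact ⟨fun ⟨z, _, hzM, hz⟩ => ⟨z, hzM, hz⟩, fun ⟨z, hzM, hz⟩ => ⟨z, hM hzM, hzM, hz⟩⟩

theorem mem_of_mem_image_collapse {y w : ZFSet.{max u v}} (hy : y ∈ collapse.{u, v} M '' M)
    (hw : w ∈ y) : w ∈ collapse.{u, v} M '' M := by
  obtain ⟨x, -, rfl⟩ := hy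
  obtain ⟨z, -, hzM, rfl⟩ := mem_collapse.1 hw
  exact ⟨z, hzM, rfl⟩

theorem collapse_injOn (hM : IsExtensional M) : M.InjOn (collapse.{u, v} M) := by
  intro x
  induction x using ZFSet.inductionOn with
  | _ x ih =>
    intro hx y hy hxy
    refine hM x hx y hy fun z hz => ⟨fun hzx => ?_, fun hzy => ?_⟩
    · obtain ⟨z', hz'y, hz'M, hz'⟩ := mem_collapse.1 (hxy ▸ collapse_mem_collapse hzx hz)
      exact ih z hzx hz hz'M hz'.symm ▸ hz'y
    · obtain ⟨z', hz'x, hz'M, hz'⟩ := mem_collapse.1 (hxy ▸ collapse_mem_collapse hzy hz)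
      exact ih z' hz'x hz'M hz hz' ▸ hz'x

theorem mem_iff_collapse_mem_collapse (hM : IsExtensional M) {x y : ZFSet.{u}} (hx : x ∈ M) :
    x ∈ y ↔ collapse.{u, v} M x ∈ collapse.{u, v} M y := by
  refine ⟨fun h => collapse_mem_collapse h hx, fun h => ?_⟩
  obtain ⟨z, hzy, hzM, hz⟩ := mem_collapse.1 h
  exact collapse_injOn hM hzM hx hz ▸ hzy

end Collapse

section Guessing

variable {lam : ZFSet.{0}} {M : Set ZFSet.{0}}

theorem exists_collapse_eq_of_subset (hM : Prec M (VSet lam)) (hG : GuessingModel M ℵ₀)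
    {x : ZFSet} (hx : x ∈ M) {s : ZFSet.{v}} (hs : s ⊆ collapse.{0, v} M x) :
    ∃ e ∈ M, collapse.{0, v} M e = s := by
  obtain ⟨e, heM, -, he⟩ := hG x hx (x.sep fun z => z ∈ M ∧ collapse M z ∈ s) ZFSet.sep_subset
    (hM.approx_aleph0 (supertransitive_VSet lam) _)
  refine ⟨e, heM, ZFSet.ext fun y => ?_⟩
  rw [mem_collapse]
  constructor
  · rintro ⟨z, hze, hzM, rfl⟩
    exact (ZFSet.mem_sep.1 ((he z hzM).1 hze)).2.2
  · intro hy
    obtain ⟨z, hzx, hzM, rfl⟩ := mem_collapse.1 (hs hy)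
    exact ⟨z, (he z hzM).2 (ZFSet.mem_sep.2 ⟨hzx, hzM, hy⟩), hzM, rfl⟩

theorem supertransitive_image_collapse (hM : Prec M (VSet lam)) (hG : GuessingModel M ℵ₀) :
    Supertransitive (collapse.{0, v} M '' M) where
  mem_of_mem _ hy _ hw := mem_of_mem_image_collapse hy hw
  mem_of_subset := by
    rintro _ ⟨x, hx, rfl⟩ s hs
    obtain ⟨e, heM, rfl⟩ := exists_collapse_eq_of_subset hM hG hx hs
    exact ⟨e, heM, rfl⟩

theorem exists_vonNeumann_mem_image_collapse (hM : Prec M (VSet lam)) (hG : GuessingModel M ℵ₀)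
    {x : ZFSet} (hx : x ∈ M) :
    ∃ o, V_ o ∈ collapse.{0, v} M '' M ∧ collapse.{0, v} M x ⊆ V_ o := by
  have hext := hM.isExtensional (supertransitive_VSet lam)
  have hxM : ∀ i, ![x] i ∈ M := by simp [hx]
  have h := (hM.2 _ _ hxM).2 (realize_subsetVonNeumann_VSet (hM.1 hx))
  rw [← realize_image_iff (collapse_injOn.{0, v} hext)
    (fun _ ha _ _ => mem_iff_collapse_mem_collapse hext ha) _ _ hxM,
    realize_subsetVonNeumann (supertransitive_image_collapse hM hG) 0 _
      (by simpa using Set.mem_image_of_mem (collapse.{0, v} M) hx)] at h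
  obtain ⟨z, hz, hxz, C, -, hC⟩ := h
  exact ⟨z.rank, hC.eq_vonNeumann ▸ hz, hC.eq_vonNeumann ▸ by simpa using hxz⟩

theorem exists_bijOn_collapse_VSet (hM : Prec M (VSet lam)) (hG : GuessingModel M ℵ₀) :
    ∃ γ : ZFSet.{v}, IsOrd γ ∧ Set.BijOn (collapse.{0, v} M) M (VSet γ) := by
  have hN : ∀ y, y ∈ collapse.{0, v} M (V_ lam.rank) ↔ y ∈ collapse.{0, v} M '' M :=
    fun _ => mem_collapse_iff_mem_image fun _ hx => ZFSet.mem_vonNeumann.2 (hM.1 hx)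
  set N := collapse.{0, v} M (V_ lam.rank)
  have hNV : N = V_ N.rank := by
    refine eq_vonNeumann_rank (fun y hy s hs => (hN s).2 ?_) fun y hy => ?_
    · exact (supertransitive_image_collapse hM hG).mem_of_subset y ((hN y).1 hy) s hs
    · obtain ⟨x, hx, rfl⟩ := (hN y).1 hy
      obtain ⟨o, ho, hxo⟩ := exists_vonNeumann_mem_image_collapse hM hG hx
      exact ⟨o, (hN _).2 ho, hxo⟩
  have hVSet : VSet N.rank.toZFSet = collapse.{0, v} M '' M := by
    ext w
    change w.rank < N.rank.toZFSet.rank ↔ _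
    rw [Ordinal.rank_toZFSet, ← hN, ← ZFSet.mem_vonNeumann, ← hNV]
  have hinj := collapse_injOn.{0, v} (hM.isExtensional (supertransitive_VSet lam))
  exact ⟨N.rank.toZFSet,
    ZFSet.isOrdinal_iff_forall_mem_isTransitive.1 (ZFSet.isOrdinal_toZFSet _),
    hVSet ▸ hinj.bijOn_image⟩

theorem guessingModel_of_bijOn (hM : Prec M (VSet lam)) {γ : ZFSet.{v}}
    {π : ZFSet.{0} → ZFSet.{v}} (hπ : Set.BijOn π M (VSet γ))
    (hmem : ∀ x ∈ M, ∀ y ∈ M, x ∈ y ↔ π x ∈ π y) (δ : Cardinal.{1}) : GuessingModel M δ := by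
  intro X hX d hd _
  obtain ⟨e, heM, he⟩ := hπ.surjOn (show (π X).sep (fun w => ∃ z ∈ M, z ∈ d ∧ π z = w) ∈ VSet γ
    from (ZFSet.rank_mono ZFSet.sep_subset).trans_lt (hπ.mapsTo hX))
  have hetrace : ∀ z ∈ M, z ∈ e ↔ z ∈ d := by
    intro z hz
    rw [hmem z hz e heM, he, ZFSet.mem_sep, ← hmem z hz X hX]
    exact ⟨fun ⟨_, z', hz'M, hz'd, hz'⟩ => hπ.injOn hz'M hz hz' ▸ hz'd,
      fun hzd => ⟨hd hzd, z, hz, hzd, rfl⟩⟩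
  have hinter : e ∩ X ∈ M := hM.definable_sep_mem (supertransitive_VSet lam) (.mem 0 1)
    (v := ![X]) (by simp [hX]) heM (by simp [ZFSet.mem_inter])
  refine ⟨e ∩ X, hinter, fun _ h => (ZFSet.mem_inter.1 h).2, fun z hz => ?_⟩
  rw [ZFSet.mem_inter, hetrace z hz]
  exact ⟨And.left, fun hzd => ⟨hzd, hd hzd⟩⟩

end Guessing

theorem guessing_iff_collapse_rank_segment_general (lam : ZFSet)
    (M : Set ZFSet) (hM : Prec M (VSet lam)) :
    GuessingModel M ℵ₀ ↔
      ∃ (γ : ZFSet) (π : ZFSet → ZFSet), IsOrd γ ∧ Set.BijOn π M (VSet γ) ∧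
        ∀ x ∈ M, ∀ y ∈ M, (x ∈ y ↔ π x ∈ π y) := by
  refine ⟨fun hG => ?_, fun ⟨_, _, _, hπ, hmem⟩ => guessingModel_of_bijOn hM hπ hmem ℵ₀⟩
  obtain ⟨γ, hγ, hπ⟩ := exists_bijOn_collapse_VSet hM hG
  exact ⟨γ, collapse M, hγ, hπ, fun _ hx _ _ =>
    mem_iff_collapse_mem_collapse (hM.isExtensional (supertransitive_VSet lam)) hx⟩

/-- Lemma 3.3 (Magidor): `M ≺ V_λ` is an `ℵ₀`-guessing model iff its transitive
collapse is `V_γ` for some ordinal `γ`. -/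
theorem guessing_iff_collapse_rank_segment (lam : ZFSet) (hlam : IsOrd lam)
    (M : Set ZFSet) (hM : Prec M (VSet lam)) :
    GuessingModel M ℵ₀ ↔
      ∃ (γ : ZFSet) (π : ZFSet → ZFSet), IsOrd γ ∧ Set.BijOn π M (VSet γ) ∧
        ∀ x ∈ M, ∀ y ∈ M, (x ∈ y ↔ π x ∈ π y) :=
  guessing_iff_collapse_rank_segment_general lam M hM

end GuessingModels
end

section
/- A map j : V_{λ+1} → V_{λ+1} is a (nontrivial) elementary embedding if and only if its range M = j[V_{λ+1}] is an ℵ₀-guessing elementary substructure of V_{λ+1}. -/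
open Cardinal

namespace GuessingModels

/-- `j` is an elementary embedding of the structure `⟨S, ∈⟩` into itself. -/
def ElemEmbOn (S : Set ZFSet) (j : ZFSet → ZFSet) : Prop :=
  (∀ x ∈ S, j x ∈ S) ∧ ∀ {n : ℕ} (φ : SF n) (v : Fin n → ZFSet), (∀ i, v i ∈ S) →
    (Realize S φ v ↔ Realize S φ (fun i => j (v i)))

section Aux
open ZFSet

/-- Transitivity of `VSet`. -/
lemma vset_trans {α : ZFSet} : ∀ y ∈ VSet α, ∀ x : ZFSet, x ∈ y → x ∈ VSet α :=
  fun y hy x hx => lt_trans (ZFSet.rank_lt_of_mem hx) hy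

lemma j_inj {R : Set ZFSet} {j : ZFSet → ZFSet}
    (htr : ∀ y ∈ R, ∀ x : ZFSet, x ∈ y → x ∈ R)
    (hjmem : ∀ x ∈ R, ∀ y ∈ R, (x ∈ y ↔ j x ∈ j y))
    {x y : ZFSet} (hx : x ∈ R) (hy : y ∈ R) (h : j x = j y) : x = y := by
  apply ZFSet.ext
  intro z
  constructor
  · intro hz
    have hzR := htr x hx z hz
    have := (hjmem z hzR x hx).1 hz
    rw [h] at this
    exact (hjmem z hzR y hy).2 this
  · intro hz
    have hzR := htr y hy z hz
    have := (hjmem z hzR y hy).1 hz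
    rw [← h] at this
    exact (hjmem z hzR x hx).2 this

/-- The key transfer lemma: truth in `j '' R` of `φ` at `j ∘ v` matches truth
in `R` at `v`. -/
lemma realize_image {R : Set ZFSet} {j : ZFSet → ZFSet}
    (htr : ∀ y ∈ R, ∀ x : ZFSet, x ∈ y → x ∈ R)
    (hjdom : ∀ x ∈ R, j x ∈ R)
    (hjmem : ∀ x ∈ R, ∀ y ∈ R, (x ∈ y ↔ j x ∈ j y)) :
    ∀ {n} (φ : SF n) (v : Fin n → ZFSet), (∀ i, v i ∈ R) →
      (Realize (j '' R) φ (fun i => j (v i)) ↔ Realize R φ v) := by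
  intro n φ
  induction φ with
  | mem i k =>
    intro v hv
    exact (hjmem (v i) (hv i) (v k) (hv k)).symm
  | eq i k =>
    intro v hv
    exact ⟨fun h => j_inj htr hjmem (hv i) (hv k) h, fun h => congrArg j h⟩
  | imp f g ihf ihg =>
    intro v hv
    exact imp_congr (ihf v hv) (ihg v hv)
  | not f ihf =>
    intro v hv
    exact not_congr (ihf v hv)
  | ex f ihf =>
    intro v hv
    constructor
    · rintro ⟨_, ⟨w, hw, rfl⟩, h⟩
      refine ⟨w, hw, ?_⟩
      have hcons : (Fin.cons (j w) (fun i => j (v i)) : Fin _ → ZFSet)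
          = fun i => j ((Fin.cons w v : Fin _ → ZFSet) i) := by
        funext i
        refine Fin.cases ?_ ?_ i <;> simp
      rw [hcons] at h
      exact (ihf (Fin.cons w v) (fun i => Fin.cases hw hv i)).1 h
    · rintro ⟨w, hw, h⟩
      refine ⟨j w, ⟨w, hw, rfl⟩, ?_⟩
      have hcons : (Fin.cons (j w) (fun i => j (v i)) : Fin _ → ZFSet)
          = fun i => j ((Fin.cons w v : Fin _ → ZFSet) i) := by
        funext i
        refine Fin.cases ?_ ?_ i <;> simp
      rw [hcons]
      exact (ihf (Fin.cons w v) (fun i => Fin.cases hw hv i)).2 h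

/-- A formula expressing `v 0 ⊆ v 1`. -/
def subF : SF 2 := .not (.ex (.not (.imp (.mem 0 1) (.mem 0 2))))

lemma realize_subF {R : Set ZFSet}
    (htr : ∀ y ∈ R, ∀ x : ZFSet, x ∈ y → x ∈ R)
    (v : Fin 2 → ZFSet) (h0 : v 0 ∈ R) :
    Realize R subF v ↔ v 0 ⊆ v 1 := by
  show (¬ ∃ x ∈ R, ¬ (x ∈ v 0 → x ∈ v 1)) ↔ _
  push_neg
  constructor
  · intro h z hz
    exact h z (htr (v 0) h0 z hz) hz
  · intro h z _ hz
    exact h hz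

end Aux

/-- Fact 3.5: an `∈`-embedding `j : V_{λ+1} → V_{λ+1}` is elementary iff its image
`j[V_{λ+1}]` is an `ℵ₀`-guessing elementary substructure of `V_{λ+1}`. -/
theorem elemEmb_iff_image_guessing (lam : ZFSet) (hlam : IsOrd lam)
    (j : ZFSet → ZFSet)
    (hjdom : ∀ x ∈ VSet (insert lam lam), j x ∈ VSet (insert lam lam))
    (hjmem : ∀ x ∈ VSet (insert lam lam), ∀ y ∈ VSet (insert lam lam),
      (x ∈ y ↔ j x ∈ j y)) :
    ElemEmbOn (VSet (insert lam lam)) j ↔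
      (Prec (j '' VSet (insert lam lam)) (VSet (insert lam lam)) ∧
        GuessingModel (j '' VSet (insert lam lam)) ℵ₀) := by
  set R := VSet (insert lam lam) with hR
  have htr : ∀ y ∈ R, ∀ x : ZFSet, x ∈ y → x ∈ R := fun y hy x hx => vset_trans y hy x hx
  constructor
  · intro hj
    refine ⟨⟨?_, ?_⟩, ?_⟩
    · rintro _ ⟨x, hx, rfl⟩
      exact hjdom x hx
    · intro n φ v hv
      simp only [Set.mem_image] at hv
      choose u hu hju using hv
      have hveq : v = fun i => j (u i) := funext fun i => (hju i).symm
      rw [hveq]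
      exact (realize_image htr hjdom hjmem φ u hu).trans (hj.2 φ u hu)
    · rintro X hX d hd -
      obtain ⟨X₀, hX₀, rfl⟩ := hX
      set d₀ := ZFSet.sep (fun x => j x ∈ d) X₀ with hd₀
      have hsub : d₀ ⊆ X₀ := fun z hz => (ZFSet.mem_sep.1 hz).1
      have hd₀R : d₀ ∈ R := lt_of_le_of_lt (ZFSet.rank_mono hsub) hX₀
      have hjsub : j d₀ ⊆ j X₀ := by
        have h1 : Realize R subF (fun i => ![d₀, X₀] i) := by
          rw [realize_subF htr _ hd₀R]
          exact hsub
        have h2 := (hj.2 subF (fun i => ![d₀, X₀] i)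
          (fun i => by fin_cases i <;> assumption)).1 h1
        rw [realize_subF htr _ (hjdom d₀ hd₀R)] at h2
        exact h2
      refine ⟨j d₀, ⟨d₀, hd₀R, rfl⟩, hjsub, ?_⟩
      rintro _ ⟨w, hw, rfl⟩
      constructor
      · intro h
        have hwd₀ : w ∈ d₀ := (hjmem w hw d₀ hd₀R).2 h
        exact (ZFSet.mem_sep.1 hwd₀).2
      · intro h
        have hwX₀ : w ∈ X₀ := (hjmem w hw X₀ hX₀).2 (hd h)
        exact (hjmem w hw d₀ hd₀R).1 (ZFSet.mem_sep.2 ⟨hwX₀, h⟩)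
  · rintro ⟨hPrec, -⟩
    refine ⟨hjdom, ?_⟩
    intro n φ v hv
    have h1 := realize_image htr hjdom hjmem φ v hv
    have h2 := hPrec.2 φ (fun i => j (v i)) (fun i => ⟨v i, hv i, rfl⟩)
    exact h1.symm.trans h2


end GuessingModels
end
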